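/- arXiv:2203.02957 — 11 statements merged into one kernel-verified Lean document; each statement's English description precedes it below -/
import Mathlib

section
/- Let 0<q<1 and μ>0. For any y∈ℝⁿ, if ȳ∈ℝⁿ is a global minimizer over ℝⁿ of the function z ↦ (1/(2μ))‖z−y‖² + ∑_{i=1}^n |z_i|^q, then every nonzero coordinate of ȳ satisfies |ȳ_i| ≥ (μ q(1−q))^{1/(2−q)}. -/
/-!
Each coordinate `a` of a minimizer minimizes the scalar problem
`t ↦ (t - b)² / (2μ) + |t| ^ q` with `b = y i`. On `(0, ∞)` that function has second derivative
`1/μ - q (1 - q) t ^ (q - 2)`, which is negative exactly for `t ^ (2 - q) < μ q (1 - q)`.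
So the function is strictly concave on `(0, (μ q (1 - q)) ^ (1 / (2 - q)))`, which therefore
contains no local minimizer; by the symmetry `t ↦ -t` the same holds on the negative side.
-/

open Set Filter Topology

theorem StrictConcaveOn.not_isLocalMin {s : Set ℝ} {f : ℝ → ℝ} {a : ℝ}
    (hf : StrictConcaveOn ℝ s f) (hs : s ∈ 𝓝 a) : ¬IsLocalMin f a := by
  intro hmin
  obtain ⟨ε, hε, hball⟩ := Metric.eventually_nhds_iff.1 (hmin.and hs)
  obtain ⟨hl_min, hl_mem⟩ := hball (y := a - ε / 2) (by rw [Real.dist_eq]; grind)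
  obtain ⟨hr_min, hr_mem⟩ := hball (y := a + ε / 2) (by rw [Real.dist_eq]; grind)
  have hmid := hf.2 hl_mem hr_mem (by linarith) (by norm_num : (0 : ℝ) < 1 / 2)
    (by norm_num : (0 : ℝ) < 1 / 2) (by norm_num)
  simp only [smul_eq_mul] at hmid
  rw [show 1 / 2 * (a - ε / 2) + 1 / 2 * (a + ε / 2) = a by ring] at hmid
  linarith

theorem Finset.summand_le_of_forall_sum_le {ι α β : Type*} [Fintype ι] [DecidableEq ι]
    [AddCommMonoid β] [PartialOrder β] [IsOrderedCancelAddMonoid β] (f : ι → α → β) {x : ι → α} (hx : ∀ z : ι → α, ∑ i, f i (x i) ≤ ∑ i, f i (z i))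
    (i : ι) (t : α) : f i (x i) ≤ f i t := by
  have h := hx (Function.update x i t)
  have hupdate : (fun j => f j (Function.update x i t j)) =
      Function.update (fun j => f j (x j)) i (f i t) :=
    funext fun j => Function.apply_update f x i t j
  rw [hupdate, Finset.sum_update_of_mem (Finset.mem_univ i),
    ← Finset.add_sum_erase _ _ (Finset.mem_univ i), Finset.sdiff_singleton_eq_erase] at h
  exact le_of_add_le_add_right h

section ScalarProblem

variable {μ q : ℝ}

theorem strictConcaveOn_sq_add_rpow_Ioo (hμ : 0 < μ) (hq0 : 0 < q) (hq1 : q < 1) (b : ℝ) :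
    StrictConcaveOn ℝ (Ioo 0 ((μ * q * (1 - q)) ^ (1 / (2 - q))))
      (fun t => 1 / (2 * μ) * (t - b) ^ 2 + t ^ q) := by
  set ψ : ℝ → ℝ := fun t => 1 / (2 * μ) * (t - b) ^ 2 + t ^ q
  have hψ' : ∀ t, 0 < t → HasDerivAt ψ (1 / μ * (t - b) + q * t ^ (q - 1)) t := fun t ht => by
    refine ((((hasDerivAt_id' t).sub_const b).pow 2 |>.const_mul (1 / (2 * μ))).add
      (Real.hasDerivAt_rpow_const (p := q) (Or.inl ht.ne'))).congr_deriv ?_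
    field_simp
    ring
  have hψ'' : ∀ x, 0 < x → deriv^[2] ψ x = 1 / μ - q * (1 - q) * x ^ (q - 2) := fun x hx => by
    have heq : deriv ψ =ᶠ[𝓝 x] fun t => 1 / μ * (t - b) + q * t ^ (q - 1) := by
      filter_upwards [Ioi_mem_nhds hx] with t ht using (hψ' t ht).deriv
    rw [Function.iterate_succ_apply, Function.iterate_one, heq.deriv_eq]
    refine HasDerivAt.deriv <| ((((hasDerivAt_id' x).sub_const b).const_mul (1 / μ)).add
      ((Real.hasDerivAt_rpow_const (p := q - 1) (Or.inl hx.ne')).const_mul q)).congr_deriv ?_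
    rw [show q - 1 - 1 = q - 2 by ring]
    ring
  have hcoef : 0 < μ * q * (1 - q) := by have := sub_pos.2 hq1; positivity
  refine strictConcaveOn_of_deriv2_neg (convex_Ioo _ _)
    ((continuous_const.mul ((continuous_id.sub continuous_const).pow 2)).add
      (continuous_id.rpow_const fun _ => Or.inr hq0.le)).continuousOn ?_
  intro x hx
  rw [interior_Ioo] at hx
  obtain ⟨hx0, hxc⟩ := hx
  have h2q : 0 < 2 - q := by linarith
  have hpow_lt : x ^ (2 - q) < μ * q * (1 - q) := by
    rwa [one_div, Real.lt_rpow_inv_iff_of_pos hx0.le hcoef.le h2q] at hxc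
  have hpow_pos : 0 < x ^ (2 - q) := Real.rpow_pos_of_pos hx0 _
  rw [hψ'' x hx0, sub_neg, show q - 2 = -(2 - q) by ring, Real.rpow_neg hx0.le,
    ← div_eq_mul_inv, div_lt_div_iff₀ hμ hpow_pos]
  linarith

theorem le_of_isLocalMin_sq_add_abs_rpow (hμ : 0 < μ) (hq0 : 0 < q) (hq1 : q < 1)
    {a b : ℝ} (ha : 0 < a) (hmin : IsLocalMin (fun t => 1 / (2 * μ) * (t - b) ^ 2 + |t| ^ q) a) :
    (μ * q * (1 - q)) ^ (1 / (2 - q)) ≤ a := by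
  by_contra! hlt
  have heq : (fun t => 1 / (2 * μ) * (t - b) ^ 2 + |t| ^ q) =ᶠ[𝓝 a]
      (fun t => 1 / (2 * μ) * (t - b) ^ 2 + t ^ q) := by
    filter_upwards [Ioi_mem_nhds ha] with t ht
    rw [abs_of_pos ht]
  exact (strictConcaveOn_sq_add_rpow_Ioo hμ hq0 hq1 b).not_isLocalMin
    (Ioo_mem_nhds ha hlt) (hmin.congr heq)

theorem le_abs_of_isLocalMin_sq_add_abs_rpow (hμ : 0 < μ) (hq0 : 0 < q) (hq1 : q < 1)
    {a b : ℝ} (ha : a ≠ 0) (hmin : IsLocalMin (fun t => 1 / (2 * μ) * (t - b) ^ 2 + |t| ^ q) a) :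
    (μ * q * (1 - q)) ^ (1 / (2 - q)) ≤ |a| := by
  rcases ha.lt_or_gt with hneg | hpos
  · rw [abs_of_neg hneg]
    refine le_of_isLocalMin_sq_add_abs_rpow hμ hq0 hq1 (b := -b) (neg_pos.2 hneg) ?_
    rw [← neg_neg a] at hmin
    have hreflect := hmin.comp_continuous continuous_neg.continuousAt
    convert hreflect using 2 with t
    simp only [Function.comp_apply, abs_neg]
    ring
  · rw [abs_of_pos hpos]
    exact le_of_isLocalMin_sq_add_abs_rpow hμ hq0 hq1 hpos hmin

end ScalarProblem

/-- Lower bound on the nonzero entries of a proximal point of the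
`ℓ_q (0<q<1)` quasi-norm: if `ȳ` is a global minimizer of
`z ↦ (1/(2μ))‖z−y‖² + ∑ i |z i|^q`, then every nonzero coordinate of `ȳ`
satisfies `|ȳ i| ≥ (μ q (1−q))^(1/(2−q))`. -/
theorem stmt0 (n : ℕ) (q μ : ℝ) (hq0 : 0 < q) (hq1 : q < 1) (hμ : 0 < μ)
    (y ybar : EuclideanSpace ℝ (Fin n))
    (hmin : ∀ z : EuclideanSpace ℝ (Fin n),
      (1 / (2 * μ)) * ‖ybar - y‖ ^ 2 + ∑ i, |ybar i| ^ q ≤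
      (1 / (2 * μ)) * ‖z - y‖ ^ 2 + ∑ i, |z i| ^ q) :
    ∀ i, ybar i ≠ 0 → (μ * q * (1 - q)) ^ (1 / (2 - q)) ≤ |ybar i| := by
  intro i hi
  have hsep : ∀ z : EuclideanSpace ℝ (Fin n),
      (1 / (2 * μ)) * ‖z - y‖ ^ 2 + ∑ i, |z i| ^ q =
        ∑ i, (1 / (2 * μ) * (z i - y i) ^ 2 + |z i| ^ q) := by
    intro z
    rw [EuclideanSpace.real_norm_sq_eq, Finset.mul_sum, ← Finset.sum_add_distrib]
    simp
  have hcoord := Finset.summand_le_of_forall_sum_le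
    (fun j t => 1 / (2 * μ) * (t - y j) ^ 2 + |t| ^ q) (x := ybar)
    (fun z => by simpa only [hsep] using hmin (WithLp.toLp 2 z)) i
  exact le_abs_of_isLocalMin_sq_add_abs_rpow hμ hq0 hq1 hi (Eventually.of_forall hcoord)
end

section
/- Let f:ℝ^m→ℝ be twice continuously differentiable, A∈ℝ^{m×n}, ψ(x):=f(Ax), λ>0, 0<q<1 and g(x):=∑_{i=1}^n |x_i|^q. If x̄∈ℝⁿ satisfies (∇ψ(x̄))_i + λ q·sign(x̄_i)·|x̄_i|^{q−1} = 0 for every index i with x̄_i ≠ 0, then there exists γ>0 such that x̄ is the unique global minimizer over ℝⁿ of z ↦ λ g(z) + (γ/2)‖z − (x̄ − γ^{−1}∇ψ(x̄))‖²; in particular x̄ ∈ prox_{γ^{−1}(λg)}(x̄ − γ^{−1}∇ψ(x̄)), i.e. x̄ is an L-type stationary point of min F := ψ + λ g. -/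
/-!
For `x > 0` and `0 ≤ q ≤ 1`, writing `r ^ q = r / r ^ (1 - q)` and bounding `r ^ (1 - q)` by
Bernoulli's inequality gives the global quadratic minorant
`|t| ^ q ≥ x ^ q + q x ^ (q - 1) (t - x) - (1 - q) x ^ (q - 2) (t - x) ^ 2` for every real `t`.
Hence on a coordinate where `x̄ᵢ ≠ 0` the criticality condition cancels the linear term and any
`γ > 2λ(1 - q)|x̄ᵢ| ^ (q - 2)` makes the coordinate objective strictly minimal at `x̄ᵢ`. On a
coordinate where `x̄ᵢ = 0`, `λ|t| ^ q` dominates the linear term for small `|t|` and `γ t² / 2`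
for large `|t|`. Expanding the square, the objective gap at `z` is the sum of these coordinate
gaps, so a `γ` large enough for every coordinate works.
-/

open Real Filter

namespace Real

lemma one_add_mul_sub_sq_le_rpow {q r : ℝ} (hq0 : 0 ≤ q) (hq1 : q ≤ 1) (hr : 0 ≤ r) :
    1 + q * (r - 1) - (1 - q) * (r - 1) ^ 2 ≤ r ^ q := by
  rcases hr.eq_or_lt with rfl | hr
  · nlinarith [rpow_nonneg (le_refl (0:ℝ)) q]
  have hy : r ^ (1 - q) ≤ 1 + (1 - q) * (r - 1) := by
    simpa using
      rpow_one_add_le_one_add_mul_self (s := r - 1) (by linarith) (by linarith) (by linarith)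
  have hprod : r ^ q * r ^ (1 - q) = r := by
    rw [← rpow_add hr, add_sub_cancel, rpow_one]
  nlinarith [rpow_pos_of_pos hr q, rpow_pos_of_pos hr (1 - q),
    mul_nonneg (rpow_pos_of_pos hr q).le (sq_nonneg (r ^ (1 - q) - 1))]

lemma tangent_sub_sq_le_rpow {q a b : ℝ} (hq0 : 0 ≤ q) (hq1 : q ≤ 1) (ha : 0 ≤ a) (hb : 0 < b) :
    b ^ q + q * b ^ (q - 1) * (a - b) - (1 - q) * b ^ (q - 2) * (a - b) ^ 2 ≤ a ^ q := by
  have h := mul_le_mul_of_nonneg_left (one_add_mul_sub_sq_le_rpow hq0 hq1 (div_nonneg ha hb.le))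
    (rpow_nonneg hb.le q)
  rw [div_rpow ha hb.le, mul_div_cancel₀ _ (rpow_pos_of_pos hb q).ne'] at h
  rw [rpow_sub_one hb.ne', rpow_sub hb, rpow_two]
  refine le_trans (le_of_eq ?_) h
  field_simp

lemma tangent_sub_sq_le_abs_rpow {q x : ℝ} (hq0 : 0 ≤ q) (hq1 : q ≤ 1) (hx : x ≠ 0) (t : ℝ) :
    |x| ^ q + q * sign x * |x| ^ (q - 1) * (t - x) - (1 - q) * |x| ^ (q - 2) * (t - x) ^ 2
      ≤ |t| ^ q := by
  have hsign : sign x * (t - x) ≤ |t| - |x| := by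
    rcases hx.lt_or_gt with h | h
    · rw [sign_of_neg h, abs_of_neg h]; linarith [neg_le_abs t]
    · rw [sign_of_pos h, abs_of_pos h]; linarith [le_abs_self t]
  have hsq : (|t| - |x|) ^ 2 ≤ (t - x) ^ 2 := sq_le_sq.2 (abs_abs_sub_abs_le t x)
  have hx' : 0 < |x| := abs_pos.2 hx
  have h1 : 0 ≤ q * |x| ^ (q - 1) := mul_nonneg hq0 (rpow_nonneg hx'.le _)
  have h2 : 0 ≤ (1 - q) * |x| ^ (q - 2) := mul_nonneg (by linarith) (rpow_nonneg hx'.le _)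
  nlinarith [tangent_sub_sq_le_rpow hq0 hq1 (abs_nonneg t) hx',
    mul_le_mul_of_nonneg_left hsign h1, mul_le_mul_of_nonneg_left hsq h2]

end Real

lemma eventually_prox_gap_pos_of_ne_zero {q lam x v : ℝ} (hq0 : 0 ≤ q) (hq1 : q ≤ 1)
    (hlam : 0 < lam) (hx : x ≠ 0) (hv : v + lam * q * sign x * |x| ^ (q - 1) = 0) :
    ∀ᶠ γ in atTop, ∀ t, t ≠ x →
      0 < lam * |t| ^ q - lam * |x| ^ q + γ / 2 * (t - x) ^ 2 + (t - x) * v := by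
  filter_upwards [eventually_gt_atTop (2 * lam * ((1 - q) * |x| ^ (q - 2)))] with γ hγ t ht
  have hsq : 0 < (t - x) ^ 2 := pow_pos (abs_pos.2 (sub_ne_zero.2 ht)) 2 |>.trans_eq (sq_abs _)
  have hv' : (t - x) * v = -(lam * (q * sign x * |x| ^ (q - 1) * (t - x))) := by
    linear_combination (t - x) * hv
  nlinarith [mul_le_mul_of_nonneg_left (tangent_sub_sq_le_abs_rpow hq0 hq1 hx t) hlam.le,
    mul_pos (by linarith : 0 < γ / 2 - lam * ((1 - q) * |x| ^ (q - 2))) hsq]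

lemma eventually_prox_gap_pos_at_zero {q lam : ℝ} (hq1 : q < 1) (hlam : 0 < lam) (v : ℝ) :
    ∀ᶠ γ in atTop, ∀ t, t ≠ 0 → 0 < lam * |t| ^ q + γ / 2 * t ^ 2 + t * v := by
  set T : ℝ := ((|v| + 1) / lam) ^ (q - 1)⁻¹
  have hT0 : 0 < T := rpow_pos_of_pos (by positivity) _
  have hTq : T ^ (q - 1) = (|v| + 1) / lam := rpow_inv_rpow (by positivity) (by linarith)
  filter_upwards [eventually_ge_atTop (2 * |v| / T)] with γ hγ t ht
  have hs : 0 < |t| := abs_pos.2 ht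
  have htv : -(|t| * |v|) ≤ t * v := abs_mul t v ▸ neg_abs_le _
  have hsq : t ^ 2 = |t| * |t| := (abs_mul_abs_self t).symm ▸ sq t
  have hγ0 : 0 ≤ γ := le_trans (by positivity) hγ
  have hpow : |t| * |t| ^ (q - 1) = |t| ^ q := by
    rw [rpow_sub_one hs.ne', mul_div_cancel₀ _ hs.ne']
  rcases le_or_gt |t| T with hle | hlt
  · have hmono : T ^ (q - 1) ≤ |t| ^ (q - 1) := rpow_le_rpow_of_nonpos hs hle (by linarith)
    rw [hTq, div_le_iff₀ hlam] at hmono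
    nlinarith [mul_le_mul_of_nonneg_left hmono hs.le, mul_nonneg hγ0 (sq_nonneg t)]
  · have hbig : |v| ≤ γ / 2 * |t| := by
      rw [div_le_iff₀ hT0] at hγ
      nlinarith [abs_nonneg v]
    nlinarith [rpow_pos_of_pos hs q, mul_le_mul_of_nonneg_left hbig hs.le]

lemma eventually_prox_gap_pos {q lam x v : ℝ} (hq0 : 0 < q) (hq1 : q < 1) (hlam : 0 < lam)
    (h : x ≠ 0 → v + lam * q * sign x * |x| ^ (q - 1) = 0) :
    ∀ᶠ γ in atTop, ∀ t, t ≠ x →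
      0 < lam * |t| ^ q - lam * |x| ^ q + γ / 2 * (t - x) ^ 2 + (t - x) * v := by
  rcases eq_or_ne x 0 with rfl | hx
  · simpa [zero_rpow hq0.ne'] using eventually_prox_gap_pos_at_zero hq1 hlam v
  · exact eventually_prox_gap_pos_of_ne_zero hq0.le hq1.le hlam hx (h hx)

lemma half_mul_norm_sub_sub_inv_smul_sq {E : Type*} [NormedAddCommGroup E] [InnerProductSpace ℝ E]
    {γ : ℝ} (hγ : γ ≠ 0) (x z v : E) :
    γ / 2 * ‖z - (x - γ⁻¹ • v)‖ ^ 2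
      = γ / 2 * ‖x - (x - γ⁻¹ • v)‖ ^ 2 + (γ / 2 * ‖z - x‖ ^ 2 + inner ℝ (z - x) v) := by
  rw [sub_sub_cancel, show z - (x - γ⁻¹ • v) = (z - x) + γ⁻¹ • v by abel, norm_add_sq_real,
    inner_smul_right, norm_smul, mul_pow, Real.norm_eq_abs, sq_abs]
  field_simp
  ring

theorem stmt1_general (n : ℕ) (q lam : ℝ) (hq0 : 0 < q) (hq1 : q < 1) (hlam : 0 < lam)
    (ψ : EuclideanSpace ℝ (Fin n) → ℝ)
    (xbar : EuclideanSpace ℝ (Fin n))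
    (hcrit : ∀ i, xbar i ≠ 0 →
      gradient ψ xbar i + lam * q * Real.sign (xbar i) * |xbar i| ^ (q - 1) = 0) :
    ∃ γ > (0:ℝ), ∀ z : EuclideanSpace ℝ (Fin n), z ≠ xbar →
      lam * (∑ i, |xbar i| ^ q)
          + (γ / 2) * ‖xbar - (xbar - γ⁻¹ • gradient ψ xbar)‖ ^ 2 <
        lam * (∑ i, |z i| ^ q)
          + (γ / 2) * ‖z - (xbar - γ⁻¹ • gradient ψ xbar)‖ ^ 2 := by
  obtain ⟨γ, hcoord, hγ⟩ := ((eventually_all.2 fun i =>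
    eventually_prox_gap_pos hq0 hq1 hlam (hcrit i)).and (eventually_gt_atTop 0)).exists
  refine ⟨γ, hγ, fun z hz => ?_⟩
  obtain ⟨i, hi⟩ : ∃ i, z i ≠ xbar i := by
    by_contra! h
    exact hz (PiLp.ext h)
  have hpos : 0 < ∑ j, (lam * |z j| ^ q - lam * |xbar j| ^ q + γ / 2 * (z j - xbar j) ^ 2
      + (z j - xbar j) * gradient ψ xbar j) := by
    refine Finset.sum_pos' (fun j _ => ?_) ⟨i, Finset.mem_univ i, hcoord i (z i) hi⟩
    rcases eq_or_ne (z j) (xbar j) with hj | hj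
    · simp [hj]
    · exact (hcoord j (z j) hj).le
  rw [half_mul_norm_sub_sub_inv_smul_sq hγ.ne' xbar z]
  simp only [EuclideanSpace.real_norm_sq_eq, PiLp.inner_apply, PiLp.sub_apply, Real.inner_apply,
    Finset.mul_sum, Finset.sum_add_distrib, Finset.sum_sub_distrib] at hpos ⊢
  linarith

/-- any critical point of `F = f∘A + λ‖·‖_q^q` (i.e. a point where the
smooth first-order condition holds on its support) is an L-type stationary point:
for some `γ > 0` it is the unique global minimizer of
`z ↦ λ g(z) + (γ/2)‖z − (x̄ − γ⁻¹∇ψ(x̄))‖²`. -/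
theorem stmt1 (m n : ℕ) (q lam : ℝ) (hq0 : 0 < q) (hq1 : q < 1) (hlam : 0 < lam)
    (f : EuclideanSpace ℝ (Fin m) → ℝ) (hf : ContDiff ℝ 2 f)
    (A : Matrix (Fin m) (Fin n) ℝ)
    (ψ : EuclideanSpace ℝ (Fin n) → ℝ) (hψ : ∀ x, ψ x = f (WithLp.toLp 2 (A.mulVec x)))
    (xbar : EuclideanSpace ℝ (Fin n))
    (hcrit : ∀ i, xbar i ≠ 0 →
      gradient ψ xbar i + lam * q * Real.sign (xbar i) * |xbar i| ^ (q - 1) = 0) :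
    ∃ γ > (0:ℝ), ∀ z : EuclideanSpace ℝ (Fin n), z ≠ xbar →
      lam * (∑ i, |xbar i| ^ q)
          + (γ / 2) * ‖xbar - (xbar - γ⁻¹ • gradient ψ xbar)‖ ^ 2 <
        lam * (∑ i, |z i| ^ q)
          + (γ / 2) * ‖z - (xbar - γ⁻¹ • gradient ψ xbar)‖ ^ 2 :=
  stmt1_general n q lam hq0 hq1 hlam ψ xbar hcrit
end

section
/- Let f:ℝ^m→ℝ be twice continuously differentiable, A∈ℝ^{m×n}, λ>0, 0<q<1, F(x):=f(Ax)+λ∑_{i=1}^n|x_i|^q. For x≠0 define the residual R(x) := ( ∑_{i: x_i≠0} [ (Aᵀ∇f(Ax))_i + λ q·sign(x_i)|x_i|^{q−1} ]² )^{1/2} (which equals the distance from 0 to the limiting subdifferential ∂F(x)). Fix x̄∈ℝⁿ∖{0}, let S̄=supp(x̄) and ū=x̄_{S̄}. Then the following are equivalent: (a) there exist ε>0, η>0, c>0 such that for all x∈ℝⁿ with ‖x−x̄‖≤ε and F(x̄)<F(x)<F(x̄)+η one has R(x) ≥ c·√(F(x)−F(x̄)); (b) there exist ε>0, η>0, c>0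 such that for all u∈ℝ^{|S̄|} with ‖u−ū‖≤ε and F_{S̄}(ū)<F_{S̄}(u)<F_{S̄}(ū)+η one has ‖∇F_{S̄}(u)‖ ≥ c·√(F_{S̄}(u)−F_{S̄}(ū)). -/
/-!
Near `x̄`, every coordinate in `S̄ = supp x̄` stays nonzero. A point `x` whose support is still
`S̄` is the zero extension of a point `u` near `ū`, and there `F x = F_{S̄} u` and
`R x = ‖∇F_{S̄} u‖`, so the two inequalities say the same thing. A point `x` with some
`x_i ≠ 0`, `i ∉ S̄`, has a huge residual: its `i`-th term contains `λ q |x_i|^{q-1} → ∞`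
(as `q < 1`) while `(Aᵀ∇f(Ax))_i` stays bounded, so it beats `c √η ≥ c √(F x - F x̄)`.
-/

open Filter Topology InnerProductSpace

lemma hasDerivAt_abs_rpow_of_ne_zero {q t : ℝ} (ht : t ≠ 0) :
    HasDerivAt (fun s : ℝ => |s| ^ q) (q * Real.sign t * |t| ^ (q - 1)) t := by
  convert (hasDerivAt_abs ht).rpow_const (p := q) (Or.inl (abs_ne_zero.2 ht)) using 1
  rcases ht.lt_or_gt with h | h <;> simp [h, Real.sign_of_neg, Real.sign_of_pos]

lemma eventually_le_abs_rpow_sub_one {q : ℝ} (hq : q < 1) (K : ℝ) :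
    ∀ᶠ s in 𝓝 (0 : ℝ), s ≠ 0 → K ≤ |s| ^ (q - 1) := by
  have h := (tendsto_rpow_neg_nhdsGT_zero (by linarith : q - 1 < 0)).eventually_ge_atTop K
  rw [eventually_nhdsWithin_iff] at h
  have habs : Tendsto (|·|) (𝓝 (0 : ℝ)) (𝓝 0) := by simpa using continuous_abs.tendsto (0 : ℝ)
  filter_upwards [habs.eventually h] with s hs hs0 using hs (abs_pos.2 hs0)

lemma ContDiff.continuous_gradient {E : Type*} [NormedAddCommGroup E] [InnerProductSpace ℝ E]
    [CompleteSpace E] {f : E → ℝ} (hf : ContDiff ℝ 1 f) : Continuous (gradient f) :=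
  (toDual ℝ E).symm.continuous.comp (hf.continuous_fderiv one_ne_zero)

lemma Finset.sum_eq_sum_coe_sort_of_eq_zero {ι M : Type*} [Fintype ι] [AddCommMonoid M]
    (S : Finset ι) {g : ι → M} (h : ∀ i ∉ S, g i = 0) : ∑ i, g i = ∑ i : S, g i :=
  (Finset.sum_subset S.subset_univ fun i _ hi => h i hi).symm.trans (Finset.sum_coe_sort S g).symm

lemma eventually_forall_ne_zero {ι : Type*} [Fintype ι] (v₀ : EuclideanSpace ℝ ι) :
    ∀ᶠ v in 𝓝 v₀, ∀ i, v₀ i ≠ 0 → v i ≠ 0 :=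
  eventually_all.2 fun i => by
    by_cases hi : v₀ i = 0
    · exact Eventually.of_forall fun _ h => absurd hi h
    · exact ((PiLp.continuous_apply 2 _ i).continuousAt.eventually_ne hi).mono fun _ h _ => h

/-- `ψ` plays the role of `dist(0, ∂φ)`. -/
def HasKLExponentHalfAt {E : Type*} [NormedAddCommGroup E] (φ ψ : E → ℝ) (x₀ : E) : Prop :=
  ∃ ε > (0:ℝ), ∃ η > (0:ℝ), ∃ c > (0:ℝ), ∀ x, ‖x - x₀‖ ≤ ε → φ x₀ < φ x → φ x < φ x₀ + η →
    c * Real.sqrt (φ x - φ x₀) ≤ ψ x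

section KL

variable {E E' : Type*} [NormedAddCommGroup E] [NormedAddCommGroup E']

lemma hasKLExponentHalfAt_iff_eventually {φ ψ : E → ℝ} {x₀ : E} :
    HasKLExponentHalfAt φ ψ x₀ ↔ ∃ η > (0:ℝ), ∃ c > (0:ℝ), ∀ᶠ x in 𝓝 x₀,
      φ x₀ < φ x → φ x < φ x₀ + η → c * Real.sqrt (φ x - φ x₀) ≤ ψ x := by
  simp only [Metric.nhds_basis_closedBall.eventually_iff, Metric.mem_closedBall, dist_eq_norm]
  constructor
  · rintro ⟨ε, hε, η, hη, c, hc, h⟩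
    exact ⟨η, hη, c, hc, ε, hε, fun x => h x⟩
  · rintro ⟨η, hη, c, hc, ε, hε, h⟩
    exact ⟨ε, hε, η, hη, c, hc, fun x => @h x⟩

theorem HasKLExponentHalfAt.of_tendsto {φ ψ : E → ℝ} {φ' ψ' : E' → ℝ} {u₀ : E} {x₀ : E'}
    {r : E' → E} (h : HasKLExponentHalfAt φ ψ u₀) (hr : Tendsto r (𝓝 x₀) (𝓝 u₀))
    (hx₀ : φ' x₀ = φ u₀)
    (hcompare : ∀ B, ∀ᶠ x in 𝓝 x₀, (φ' x = φ (r x) ∧ ψ (r x) ≤ ψ' x) ∨ B ≤ ψ' x) :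
    HasKLExponentHalfAt φ' ψ' x₀ := by
  rw [hasKLExponentHalfAt_iff_eventually] at h ⊢
  obtain ⟨η, hη, c, hc, hKL⟩ := h
  refine ⟨η, hη, c, hc, ?_⟩
  filter_upwards [hr.eventually hKL, hcompare (c * Real.sqrt η)] with x hKLx hx hlo hhi
  rcases hx with ⟨hφ, hψ⟩ | hB
  · rw [hφ, hx₀] at hlo hhi ⊢
    exact (hKLx hlo hhi).trans hψ
  · calc c * Real.sqrt (φ' x - φ' x₀) ≤ c * Real.sqrt η := by gcongr; linarith
      _ ≤ ψ' x := hB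

end KL

section ExtendByZero

variable {ι : Type*} [Fintype ι] [DecidableEq ι]

def extendByZero (S : Finset ι) : EuclideanSpace ℝ S →ₗᵢ[ℝ] EuclideanSpace ℝ ι where
  toFun u := WithLp.toLp 2 fun i => if h : i ∈ S then u ⟨i, h⟩ else 0
  map_add' u w := by ext i; by_cases h : i ∈ S <;> simp [h]
  map_smul' c u := by ext i; by_cases h : i ∈ S <;> simp [h]
  norm_map' u := by
    simp only [LinearMap.coe_mk, AddHom.coe_mk, EuclideanSpace.norm_eq]
    rw [Finset.sum_eq_sum_coe_sort_of_eq_zero S fun i hi => by simp [hi]]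
    simp

@[simp]
theorem extendByZero_apply_coe {S : Finset ι} (u : EuclideanSpace ℝ S) (i : S) :
    extendByZero S u i = u i := by
  simp [extendByZero]

theorem extendByZero_apply_of_notMem {S : Finset ι} (u : EuclideanSpace ℝ S) {i : ι}
    (hi : i ∉ S) : extendByZero S u i = 0 := by
  simp [extendByZero, hi]

theorem extendByZero_restrict {S : Finset ι} {x : EuclideanSpace ℝ ι} (hx : ∀ i ∉ S, x i = 0) :
    extendByZero S (WithLp.toLp 2 fun i : S => x i) = x := by
  ext i
  by_cases hi : i ∈ S
  · exact extendByZero_apply_coe _ ⟨i, hi⟩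
  · rw [extendByZero_apply_of_notMem _ hi, hx i hi]

theorem mulVec_extendByZero {κ : Type*} (M : Matrix κ ι ℝ) {S : Finset ι} (u : EuclideanSpace ℝ S) :
    M.mulVec (extendByZero S u) = (M.submatrix id (↑) : Matrix κ S ℝ).mulVec u := by
  ext j
  simp only [Matrix.mulVec, dotProduct]
  rw [Finset.sum_eq_sum_coe_sort_of_eq_zero S fun i hi => by simp [extendByZero_apply_of_notMem _ hi]]
  simp

end ExtendByZero

noncomputable section

variable {κ ι : Type*} [Fintype ι]

def lqObjective (f : EuclideanSpace ℝ κ → ℝ) (M : Matrix κ ι ℝ) (lam q : ℝ)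
    (v : EuclideanSpace ℝ ι) : ℝ :=
  f (WithLp.toLp 2 (M.mulVec v)) + lam * ∑ i, |v i| ^ q

theorem lqObjective_extendByZero [DecidableEq ι] {f : EuclideanSpace ℝ κ → ℝ} (M : Matrix κ ι ℝ)
    {lam q : ℝ} (hq : q ≠ 0) {S : Finset ι} (u : EuclideanSpace ℝ S) :
    lqObjective f M lam q (extendByZero S u) = lqObjective f (M.submatrix id (↑)) lam q u := by
  rw [lqObjective, lqObjective, mulVec_extendByZero M,
    Finset.sum_eq_sum_coe_sort_of_eq_zero S fun i hi => by
      simp [extendByZero_apply_of_notMem _ hi, Real.zero_rpow hq]]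
  simp

variable [Fintype κ]

def lqResidualComponent (f : EuclideanSpace ℝ κ → ℝ) (M : Matrix κ ι ℝ) (lam q : ℝ)
    (v : EuclideanSpace ℝ ι) (i : ι) : ℝ :=
  (M.transpose.mulVec (gradient (F := EuclideanSpace ℝ κ) f (WithLp.toLp 2 (M.mulVec v)))) i
    + lam * q * Real.sign (v i) * |v i| ^ (q - 1)

def lqResidual (f : EuclideanSpace ℝ κ → ℝ) (M : Matrix κ ι ℝ) (lam q : ℝ)
    (v : EuclideanSpace ℝ ι) : ℝ :=
  Real.sqrt (∑ i ∈ Finset.univ.filter (fun i => v i ≠ 0), lqResidualComponent f M lam q v i ^ 2)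

variable {f : EuclideanSpace ℝ κ → ℝ} (M : Matrix κ ι ℝ) {lam q : ℝ}

theorem hasGradientAt_lqObjective [DecidableEq ι] {v : EuclideanSpace ℝ ι}
    (hf : DifferentiableAt ℝ f (WithLp.toLp 2 (M.mulVec v))) (hv : ∀ i, v i ≠ 0) :
    HasGradientAt (lqObjective f M lam q) (WithLp.toLp 2 (lqResidualComponent f M lam q v)) v := by
  set L := (Matrix.toLpLin 2 2 M).toContinuousLinearMap
  have hsmooth : HasFDerivAt (fun w => f (L w)) ((fderiv ℝ f (L v)).comp L) v :=
    hf.hasFDerivAt.comp v L.hasFDerivAt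
  have hcoord (i : ι) : HasFDerivAt (fun w : EuclideanSpace ℝ ι => |w i| ^ q)
      ((q * Real.sign (v i) * |v i| ^ (q - 1)) •
        (EuclideanSpace.proj i : EuclideanSpace ℝ ι →L[ℝ] ℝ)) v :=
    (hasDerivAt_abs_rpow_of_ne_zero (hv i)).comp_hasFDerivAt
      (f := (EuclideanSpace.proj i : EuclideanSpace ℝ ι →L[ℝ] ℝ)) v
      (ContinuousLinearMap.hasFDerivAt _)
  have hderiv := hsmooth.add
    ((HasFDerivAt.fun_sum (u := Finset.univ) fun i _ => hcoord i).const_mul lam)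
  have hgrad (y z : EuclideanSpace ℝ κ) : fderiv ℝ f y z = inner ℝ (gradient f y) z :=
    toDual_symm_apply.symm
  have hadj (w : EuclideanSpace ℝ ι) (g : κ → ℝ) :
      M.mulVec w ⬝ᵥ g = w ⬝ᵥ M.transpose.mulVec g := by
    rw [dotProduct_comm, Matrix.dotProduct_mulVec, Matrix.mulVec_transpose, dotProduct_comm]
  rw [hasGradientAt_iff_hasFDerivAt]
  refine hderiv.congr_fderiv ?_
  ext w
  simp only [add_apply, ContinuousLinearMap.comp_apply, hgrad,
    toDual_apply_apply, EuclideanSpace.inner_eq_star_dotProduct, star_trivial]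
  simp only [L, LinearMap.coe_toContinuousLinearMap', Matrix.toLpLin_apply, hadj]
  simp only [dotProduct, smul_apply, sum_apply, PiLp.proj_apply, smul_eq_mul, Finset.mul_sum,
    lqResidualComponent, mul_add, Finset.sum_add_distrib, add_right_inj]
  exact Finset.sum_congr rfl fun i _ => by ring

theorem lqResidual_eq_norm_gradient [DecidableEq ι] {v : EuclideanSpace ℝ ι}
    (hf : DifferentiableAt ℝ f (WithLp.toLp 2 (M.mulVec v))) (hv : ∀ i, v i ≠ 0) :
    lqResidual f M lam q v = ‖gradient (lqObjective f M lam q) v‖ := by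
  rw [(hasGradientAt_lqObjective M hf hv).gradient, EuclideanSpace.norm_eq, lqResidual,
    Finset.filter_true_of_mem fun i _ => hv i]
  simp

theorem abs_lqResidualComponent_le_lqResidual {v : EuclideanSpace ℝ ι} {i : ι} (hi : v i ≠ 0) :
    |lqResidualComponent f M lam q v i| ≤ lqResidual f M lam q v := by
  rw [← Real.sqrt_sq_eq_abs]
  exact Real.sqrt_le_sqrt <| Finset.single_le_sum (fun j _ => sq_nonneg _) (by simpa using hi)

theorem eventually_le_lqResidual (hf : ContDiff ℝ 1 f) (hq : q < 1)
    (hlamq : 0 < lam * q) (x₀ : EuclideanSpace ℝ ι) (B : ℝ) :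
    ∀ᶠ x in 𝓝 x₀, ∀ i, x₀ i = 0 → x i ≠ 0 → B ≤ lqResidual f M lam q x := by
  refine eventually_all.2 fun i => ?_
  by_cases hi : x₀ i = 0
  swap
  · exact Eventually.of_forall fun x h => absurd h hi
  set g : EuclideanSpace ℝ ι → ℝ := fun x =>
    (M.transpose.mulVec (gradient (F := EuclideanSpace ℝ κ) f (WithLp.toLp 2 (M.mulVec x)))) i
  have hg : Continuous g := by have := hf.continuous_gradient; fun_prop
  have hbounded : ∀ᶠ x in 𝓝 x₀, |g x| < |g x₀| + 1 :=
    hg.abs.continuousAt.eventually_lt continuousAt_const (lt_add_one _)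
  have hcoord : Tendsto (fun x : EuclideanSpace ℝ ι => x i) (𝓝 x₀) (𝓝 0) :=
    hi ▸ (PiLp.continuous_apply 2 _ i).tendsto x₀
  filter_upwards [hbounded, hcoord.eventually
    (eventually_le_abs_rpow_sub_one hq ((B + |g x₀| + 1) / (lam * q)))] with x hgx hlarge _ hxi
  have hpenalty : |lam * q * Real.sign (x i) * |x i| ^ (q - 1)| = lam * q * |x i| ^ (q - 1) := by
    rcases Real.sign_apply_eq_of_ne_zero _ hxi with h | h <;>
      simp [h, abs_of_pos hlamq, Real.rpow_nonneg]
  calc B ≤ lam * q * |x i| ^ (q - 1) - |g x| := by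
        have := (div_le_iff₀' hlamq).1 (hlarge hxi)
        linarith
    _ ≤ |g x + lam * q * Real.sign (x i) * |x i| ^ (q - 1)| := by
        simpa [hpenalty, add_comm] using abs_sub_abs_le_abs_sub
          (lam * q * Real.sign (x i) * |x i| ^ (q - 1)) (-g x)
    _ ≤ lqResidual f M lam q x := abs_lqResidualComponent_le_lqResidual M hxi

variable [DecidableEq ι]

theorem lqResidual_extendByZero {S : Finset ι} (u : EuclideanSpace ℝ S) :
    lqResidual f M lam q (extendByZero S u) = lqResidual f (M.submatrix id (↑)) lam q u := by
  rw [lqResidual, lqResidual, Finset.sum_filter, Finset.sum_filter,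
    Finset.sum_eq_sum_coe_sort_of_eq_zero S fun i hi => by simp [extendByZero_apply_of_notMem _ hi]]
  simp only [lqResidualComponent, extendByZero_apply_coe, mulVec_extendByZero M]
  rfl

theorem HasKLExponentHalfAt.lqObjective_submatrix (hf : Differentiable ℝ f) (hq : q ≠ 0)
    {S : Finset ι} {u₀ : EuclideanSpace ℝ S} (hu₀ : ∀ i, u₀ i ≠ 0)
    (h : HasKLExponentHalfAt (lqObjective f M lam q) (lqResidual f M lam q) (extendByZero S u₀)) :
    HasKLExponentHalfAt (lqObjective f (M.submatrix id (↑)) lam q)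
      (fun u => ‖gradient (lqObjective f (M.submatrix id (↑)) lam q) u‖) u₀ := by
  refine h.of_tendsto ((extendByZero S).continuous.tendsto u₀)
    (lqObjective_extendByZero M hq u₀).symm fun _ => ?_
  filter_upwards [eventually_forall_ne_zero u₀] with u hu
  refine Or.inl ⟨(lqObjective_extendByZero M hq u).symm, le_of_eq ?_⟩
  rw [lqResidual_extendByZero M, lqResidual_eq_norm_gradient _ (hf _) fun i => hu i (hu₀ i)]

theorem HasKLExponentHalfAt.lqObjective_of_submatrix (hf : ContDiff ℝ 1 f)
    (hlam : 0 < lam) (hq0 : 0 < q) (hq1 : q < 1) {S : Finset ι} {u₀ : EuclideanSpace ℝ S}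
    (hu₀ : ∀ i, u₀ i ≠ 0)
    (h : HasKLExponentHalfAt (lqObjective f (M.submatrix id (↑)) lam q)
      (fun u => ‖gradient (lqObjective f (M.submatrix id (↑)) lam q) u‖) u₀) :
    HasKLExponentHalfAt (lqObjective f M lam q) (lqResidual f M lam q) (extendByZero S u₀) := by
  set r : EuclideanSpace ℝ ι → EuclideanSpace ℝ S := fun x => WithLp.toLp 2 fun i : S => x i
  have hr : Tendsto r (𝓝 (extendByZero S u₀)) (𝓝 u₀) := by
    have hcont : Continuous r := by fun_prop
    convert hcont.tendsto _
    ext i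
    simp [r]
  refine h.of_tendsto hr (lqObjective_extendByZero M hq0.ne' u₀) fun B => ?_
  filter_upwards [eventually_forall_ne_zero (extendByZero S u₀),
    eventually_le_lqResidual M hf hq1 (mul_pos hlam hq0) (extendByZero S u₀) B]
    with x hne hlarge
  by_cases hnew : ∃ i ∉ S, x i ≠ 0
  · obtain ⟨i, hiS, hxi⟩ := hnew
    exact Or.inr (hlarge i (extendByZero_apply_of_notMem u₀ hiS) hxi)
  · have hsupp : ∀ i ∉ S, x i = 0 := by simpa using hnew
    have hx : extendByZero S (r x) = x := extendByZero_restrict hsupp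
    have hrx : ∀ i, r x i ≠ 0 := fun i => hne i (by simpa using hu₀ i)
    refine Or.inl ⟨by rw [← hx, lqObjective_extendByZero M hq0.ne', hx], le_of_eq ?_⟩
    rw [← lqResidual_eq_norm_gradient _ (hf.differentiable one_ne_zero _) hrx,
      ← lqResidual_extendByZero M, hx]

end

theorem stmt3_general (m n : ℕ) (q lam : ℝ) (hq0 : 0 < q) (hq1 : q < 1) (hlam : 0 < lam)
    (f : EuclideanSpace ℝ (Fin m) → ℝ) (hf : ContDiff ℝ 2 f)
    (A : Matrix (Fin m) (Fin n) ℝ)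
    (F : EuclideanSpace ℝ (Fin n) → ℝ)
    (hF : ∀ x, F x = f (WithLp.toLp 2 (A.mulVec x)) + lam * ∑ i, |x i| ^ q)
    (R : EuclideanSpace ℝ (Fin n) → ℝ)
    (hR : ∀ x, R x = Real.sqrt (∑ i ∈ Finset.univ.filter (fun i => x i ≠ 0),
      ((A.transpose.mulVec (gradient (F := EuclideanSpace ℝ (Fin m)) f (WithLp.toLp 2 (A.mulVec x)))) i
        + lam * q * Real.sign (x i) * |x i| ^ (q - 1)) ^ 2))
    (xbar : EuclideanSpace ℝ (Fin n))
    (Sbar : Finset (Fin n)) (hSbar : ∀ i, i ∈ Sbar ↔ xbar i ≠ 0)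
    (ASbar : Matrix (Fin m) {i // i ∈ Sbar} ℝ) (hASbar : ∀ j i, ASbar j i = A j i.1)
    (ubar : EuclideanSpace ℝ {i // i ∈ Sbar}) (hubar : ∀ i, ubar i = xbar i.1)
    (FS : EuclideanSpace ℝ {i // i ∈ Sbar} → ℝ)
    (hFS : ∀ u, FS u = f (WithLp.toLp 2 (ASbar.mulVec u)) + lam * ∑ i, |u i| ^ q) :
    (∃ ε > (0:ℝ), ∃ η > (0:ℝ), ∃ c > (0:ℝ), ∀ x : EuclideanSpace ℝ (Fin n),
        ‖x - xbar‖ ≤ ε → F xbar < F x → F x < F xbar + η →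
        c * Real.sqrt (F x - F xbar) ≤ R x) ↔
    (∃ ε > (0:ℝ), ∃ η > (0:ℝ), ∃ c > (0:ℝ), ∀ u : EuclideanSpace ℝ {i // i ∈ Sbar},
        ‖u - ubar‖ ≤ ε → FS ubar < FS u → FS u < FS ubar + η →
        c * Real.sqrt (FS u - FS ubar) ≤ ‖gradient FS u‖) := by
  obtain rfl : F = lqObjective f A lam q := funext hF
  obtain rfl : R = lqResidual f A lam q := funext hR
  obtain rfl : ASbar = A.submatrix id (↑) := Matrix.ext hASbar
  obtain rfl : FS = lqObjective f (A.submatrix id (↑)) lam q := funext hFS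
  have hubar_ne : ∀ i, ubar i ≠ 0 := fun i => hubar i ▸ (hSbar i).1 i.2
  obtain rfl : xbar = extendByZero Sbar ubar := by
    ext i
    by_cases hi : i ∈ Sbar
    · simpa [hubar] using (extendByZero_apply_coe ubar ⟨i, hi⟩).symm
    · rw [extendByZero_apply_of_notMem ubar hi]
      simpa [hi] using (hSbar i).not
  exact ⟨HasKLExponentHalfAt.lqObjective_submatrix A (hf.differentiable two_ne_zero) hq0.ne'
      hubar_ne,
    HasKLExponentHalfAt.lqObjective_of_submatrix A (hf.of_le one_le_two) hlam hq0 hq1 hubar_ne⟩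

/-- equivalence of the KL property of exponent 1/2 of
`F = f∘A + λ‖·‖_q^q` at `x̄ ≠ 0` (stated via the residual
`R(x) = dist(0, ∂F(x))`) and the KL property of exponent 1/2 of the restricted
smooth function `F_{S̄}` at `ū = x̄_{S̄}` with `S̄ = supp(x̄)`. -/
theorem stmt3 (m n : ℕ) (q lam : ℝ) (hq0 : 0 < q) (hq1 : q < 1) (hlam : 0 < lam)
    (f : EuclideanSpace ℝ (Fin m) → ℝ) (hf : ContDiff ℝ 2 f)
    (A : Matrix (Fin m) (Fin n) ℝ)
    (F : EuclideanSpace ℝ (Fin n) → ℝ)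
    (hF : ∀ x, F x = f (WithLp.toLp 2 (A.mulVec x)) + lam * ∑ i, |x i| ^ q)
    (R : EuclideanSpace ℝ (Fin n) → ℝ)
    (hR : ∀ x, R x = Real.sqrt (∑ i ∈ Finset.univ.filter (fun i => x i ≠ 0),
      ((A.transpose.mulVec (gradient (F := EuclideanSpace ℝ (Fin m)) f (WithLp.toLp 2 (A.mulVec x)))) i
        + lam * q * Real.sign (x i) * |x i| ^ (q - 1)) ^ 2))
    (xbar : EuclideanSpace ℝ (Fin n)) (hxbar : xbar ≠ 0)
    (Sbar : Finset (Fin n)) (hSbar : ∀ i, i ∈ Sbar ↔ xbar i ≠ 0)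
    (ASbar : Matrix (Fin m) {i // i ∈ Sbar} ℝ) (hASbar : ∀ j i, ASbar j i = A j i.1)
    (ubar : EuclideanSpace ℝ {i // i ∈ Sbar}) (hubar : ∀ i, ubar i = xbar i.1)
    (FS : EuclideanSpace ℝ {i // i ∈ Sbar} → ℝ)
    (hFS : ∀ u, FS u = f (WithLp.toLp 2 (ASbar.mulVec u)) + lam * ∑ i, |u i| ^ q) :
    (∃ ε > (0:ℝ), ∃ η > (0:ℝ), ∃ c > (0:ℝ), ∀ x : EuclideanSpace ℝ (Fin n),
        ‖x - xbar‖ ≤ ε → F xbar < F x → F x < F xbar + η →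
        c * Real.sqrt (F x - F xbar) ≤ R x) ↔
    (∃ ε > (0:ℝ), ∃ η > (0:ℝ), ∃ c > (0:ℝ), ∀ u : EuclideanSpace ℝ {i // i ∈ Sbar},
        ‖u - ubar‖ ≤ ε → FS ubar < FS u → FS u < FS ubar + η →
        c * Real.sqrt (FS u - FS ubar) ≤ ‖gradient FS u‖) :=
  stmt3_general m n q lam hq0 hq1 hlam f hf A F hF R hR xbar Sbar hSbar ASbar hASbar ubar hubar FS
    hFS
end

section
/- Let ψ:ℝⁿ→ℝ be continuously differentiable, λ>0, 0<q<1, g(x):=∑_{i=1}^n|x_i|^q, F:=ψ+λg, and let α̃>0, μ>0, L>0. Let x∈ℝⁿ and let x⁺ be a global minimizer over ℝⁿ of z ↦ ⟨∇ψ(x), z−x⟩ + (μ/2)‖z−x‖² + λ g(z). If ∇ψ is L-Lipschitz on a convex set containing x and x⁺ and μ ≥ L + α̃, then F(x⁺) ≤ F(x) − (α̃/2)‖x⁺−x‖². (In particular, the backtracking line search of the proximal-gradient step terminates after finitely many trials.) -/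
/-!
Along the segment from `x` to `x⁺`, the `L`-Lipschitz gradient gives the descent lemma
`ψ x⁺ ≤ ψ x + ⟪∇ψ x, x⁺ - x⟫ + L/2 ‖x⁺ - x‖²`. Comparing the minimized model at `x⁺` with its
value at `z = x` and adding the two inequalities gives the decrease with constant `μ - L ≥ α̃`.
-/

open Set
open scoped NNReal RealInnerProductSpace Gradient

section DescentLemma

variable {E : Type*} [NormedAddCommGroup E] [InnerProductSpace ℝ E] [CompleteSpace E] {f : E → ℝ}

theorem hasDerivAt_comp_add_smul {x v : E} {t : ℝ} (hf : DifferentiableAt ℝ f (x + t • v)) :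
    HasDerivAt (fun s : ℝ => f (x + s • v)) ⟪∇ f (x + t • v), v⟫ t := by
  have hline : HasDerivAt (fun s : ℝ => x + s • v) v t := by
    simpa using ((hasDerivAt_id t).smul_const v).const_add x
  rw [inner_gradient_left]
  exact hf.hasFDerivAt.comp_hasDerivAt t hline

theorem inner_gradient_sub_le_of_lipschitzOnWith {C : Set E} {K : ℝ≥0}
    (hLip : LipschitzOnWith K (∇ f) C) {x y : E} (hx : x ∈ C) (hy : y ∈ C) (w : E) :
    ⟪∇ f y - ∇ f x, w⟫ ≤ K * ‖y - x‖ * ‖w‖ :=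
  (real_inner_le_norm _ _).trans <|
    mul_le_mul_of_nonneg_right (hLip.norm_sub_le hy hx) (norm_nonneg w)

theorem le_add_inner_gradient_add_of_lipschitzOnWith {C : Set E} (hC : Convex ℝ C) {K : ℝ≥0}
    (hf : ∀ y ∈ C, DifferentiableAt ℝ f y) (hLip : LipschitzOnWith K (∇ f) C)
    {x y : E} (hx : x ∈ C) (hy : y ∈ C) :
    f y ≤ f x + ⟪∇ f x, y - x⟫ + K / 2 * ‖y - x‖ ^ 2 := by
  set v := y - x
  have hmem : ∀ t ∈ Icc (0 : ℝ) 1, x + t • v ∈ C := fun t ht => hC.add_smul_sub_mem hx hy ht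
  -- `φ` is the gap to the quadratic upper model along the segment; Lipschitz-ness makes it antitone.
  set φ : ℝ → ℝ := fun t => f (x + t • v) - t * ⟪∇ f x, v⟫ - K / 2 * ‖v‖ ^ 2 * t ^ 2
  have hφ : ∀ t ∈ Icc (0 : ℝ) 1,
      HasDerivAt φ (⟪∇ f (x + t • v) - ∇ f x, v⟫ - K * ‖v‖ ^ 2 * t) t := by
    intro t ht
    have := (((hasDerivAt_comp_add_smul (hf _ (hmem t ht))).sub
      (hasDerivAt_mul_const ⟪∇ f x, v⟫)).sub ((hasDerivAt_pow 2 t).const_mul (K / 2 * ‖v‖ ^ 2)))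
    refine this.congr_deriv ?_
    rw [inner_sub_left]
    push_cast
    ring
  have hanti : AntitoneOn φ (Icc 0 1) := by
    refine antitoneOn_of_hasDerivWithinAt_nonpos (convex_Icc 0 1)
      (fun t ht => (hφ t ht).continuousAt.continuousWithinAt)
      (fun t ht => (hφ t (interior_subset ht)).hasDerivWithinAt) fun t ht => ?_
    rw [interior_Icc] at ht
    have hdist : ‖x + t • v - x‖ = t * ‖v‖ := by
      rw [add_sub_cancel_left, norm_smul, Real.norm_of_nonneg ht.1.le]
    have := inner_gradient_sub_le_of_lipschitzOnWith hLip hx (hmem t (Ioo_subset_Icc_self ht)) v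
    rw [hdist] at this
    linarith
  have := hanti (left_mem_Icc.2 zero_le_one) (right_mem_Icc.2 zero_le_one) zero_le_one
  simp only [φ, v, zero_smul, add_zero, one_smul, add_sub_cancel] at this
  linarith


theorem add_le_sub_sq_norm_of_model_le {C : Set E} (hC : Convex ℝ C) {K : ℝ≥0}
    (hf : ∀ y ∈ C, DifferentiableAt ℝ f y) (hLip : LipschitzOnWith K (∇ f) C)
    {x y : E} (hx : x ∈ C) (hy : y ∈ C) {h : E → ℝ} {μ : ℝ}
    (hmodel : ⟪∇ f x, y - x⟫ + μ / 2 * ‖y - x‖ ^ 2 + h y ≤ h x) :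
    f y + h y ≤ f x + h x - (μ - K) / 2 * ‖y - x‖ ^ 2 := by
  have := le_add_inner_gradient_add_of_lipschitzOnWith hC hf hLip hx hy
  linarith

end DescentLemma

theorem stmt4_general (n : ℕ) (q lam alphat μ L : ℝ) (hL : 0 < L)
    (ψ : EuclideanSpace ℝ (Fin n) → ℝ) (hψ : ContDiff ℝ 1 ψ)
    (x xp : EuclideanSpace ℝ (Fin n))
    (hmin : ∀ z : EuclideanSpace ℝ (Fin n),
      (inner ℝ (gradient ψ x) (xp - x) : ℝ) + (μ / 2) * ‖xp - x‖ ^ 2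
          + lam * ∑ i, |xp i| ^ q ≤
        (inner ℝ (gradient ψ x) (z - x) : ℝ) + (μ / 2) * ‖z - x‖ ^ 2
          + lam * ∑ i, |z i| ^ q)
    (C : Set (EuclideanSpace ℝ (Fin n))) (hC : Convex ℝ C)
    (hxC : x ∈ C) (hxpC : xp ∈ C)
    (hLip : LipschitzOnWith (Real.toNNReal L) (gradient ψ) C)
    (hμ : L + alphat ≤ μ) :
    ψ xp + lam * ∑ i, |xp i| ^ q ≤
      ψ x + lam * ∑ i, |x i| ^ q - (alphat / 2) * ‖xp - x‖ ^ 2 := by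
  have hdecrease := add_le_sub_sq_norm_of_model_le hC
    (fun y _ => hψ.differentiable one_ne_zero y) hLip hxC hxpC
    (h := fun z => lam * ∑ i, |z i| ^ q) (μ := μ) (by simpa using hmin x)
  rw [Real.coe_toNNReal L hL.le] at hdecrease
  calc ψ xp + lam * ∑ i, |xp i| ^ q
      ≤ ψ x + lam * ∑ i, |x i| ^ q - (μ - L) / 2 * ‖xp - x‖ ^ 2 := hdecrease
    _ ≤ ψ x + lam * ∑ i, |x i| ^ q - (alphat / 2) * ‖xp - x‖ ^ 2 := by
      gcongr
      linarith

/-- sufficient-decrease property of the proximal-gradient step.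
If `x⁺` minimizes `z ↦ ⟨∇ψ(x), z−x⟩ + (μ/2)‖z−x‖² + λ g(z)`, `∇ψ` is
`L`-Lipschitz on a convex set containing `x` and `x⁺`, and `μ ≥ L + α̃`, then
`F(x⁺) ≤ F(x) − (α̃/2)‖x⁺−x‖²` for `F = ψ + λ g`. -/
theorem stmt4 (n : ℕ) (q lam alphat μ L : ℝ) (hq0 : 0 < q) (hq1 : q < 1)
    (hlam : 0 < lam) (halpha : 0 < alphat) (hμpos : 0 < μ) (hL : 0 < L)
    (ψ : EuclideanSpace ℝ (Fin n) → ℝ) (hψ : ContDiff ℝ 1 ψ)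
    (x xp : EuclideanSpace ℝ (Fin n))
    (hmin : ∀ z : EuclideanSpace ℝ (Fin n),
      (inner ℝ (gradient ψ x) (xp - x) : ℝ) + (μ / 2) * ‖xp - x‖ ^ 2
          + lam * ∑ i, |xp i| ^ q ≤
        (inner ℝ (gradient ψ x) (z - x) : ℝ) + (μ / 2) * ‖z - x‖ ^ 2
          + lam * ∑ i, |z i| ^ q)
    (C : Set (EuclideanSpace ℝ (Fin n))) (hC : Convex ℝ C)
    (hxC : x ∈ C) (hxpC : xp ∈ C)
    (hLip : LipschitzOnWith (Real.toNNReal L) (gradient ψ) C)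
    (hμ : L + alphat ≤ μ) :
    ψ xp + lam * ∑ i, |xp i| ^ q ≤
      ψ x + lam * ∑ i, |x i| ^ q - (alphat / 2) * ‖xp - x‖ ^ 2 :=
  stmt4_general n q lam alphat μ L hL ψ hψ x xp hmin C hC hxC hxpC hLip hμ
end

section
/- Let 0<q<1, λ>0 and 0<υ<M<∞. There exists a constant ϖ>0 such that for every γ>0 and every s∈ℝ, if t̄ is a global minimizer over ℝ of the function h_{γ,s}(t) := (γ/2)(t−s)² + λ|t|^q and υ ≤ |t̄| ≤ M, then γ + λ q(q−1)|t̄|^{q−2} ≥ ϖ. (Note γ + λq(q−1)|t̄|^{q−2} = h_{γ,s}''(t̄).) -/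
/-!
Reflecting `t ↦ -t` reduces to a minimizer `u = |t̄| > 0`, where the objective is smooth, so
`γ (u - s) + λ q u ^ (q - 1) = 0`. Comparing the value at `u` with the value at `0` and
substituting this first-order condition gives `γ ≥ 2 λ (1 - q) u ^ (q - 2)`, hence
`γ + λ q (q - 1) u ^ (q - 2) ≥ λ (1 - q) (2 - q) u ^ (q - 2) ≥ λ (1 - q) (2 - q) M ^ (q - 2)`.
-/

open Filter Topology

noncomputable def lqProxObjective (lam q γ s t : ℝ) : ℝ :=
  γ / 2 * (t - s) ^ 2 + lam * |t| ^ q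

namespace lqProxObjective

variable {lam q γ s : ℝ}

lemma apply_neg (t : ℝ) :
    lqProxObjective lam q γ s (-t) = lqProxObjective lam q γ (-s) t := by
  simp only [lqProxObjective, abs_neg]
  ring

lemma isMinOn_abs {tbar : ℝ} (h : IsMinOn (lqProxObjective lam q γ s) Set.univ tbar) :
    ∃ s', IsMinOn (lqProxObjective lam q γ s') Set.univ |tbar| := by
  rcases le_or_gt 0 tbar with htbar | htbar
  · exact ⟨s, by rwa [abs_of_nonneg htbar]⟩
  · refine ⟨-s, isMinOn_univ_iff.mpr fun t => ?_⟩
    rw [abs_of_neg htbar, ← apply_neg, ← apply_neg, neg_neg]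
    exact isMinOn_univ_iff.mp h _

lemma hasDerivAt_of_pos {u : ℝ} (hu : 0 < u) :
    HasDerivAt (lqProxObjective lam q γ s) (γ * (u - s) + lam * (q * u ^ (q - 1))) u := by
  have hquad : HasDerivAt (fun t => γ / 2 * (t - s) ^ 2) (γ * (u - s)) u :=
    (((hasDerivAt_id' u).sub_const s).pow 2 |>.const_mul (γ / 2)).congr_deriv
      (by push_cast; ring)
  have hsmooth := hquad.add ((Real.hasDerivAt_rpow_const (p := q) (Or.inl hu.ne')).const_mul lam)
  refine hsmooth.congr_of_eventuallyEq ?_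
  filter_upwards [eventually_gt_nhds hu] with t ht
  simp only [lqProxObjective, abs_of_pos ht, Pi.add_apply]

lemma deriv_eq_zero_of_isMinOn {u : ℝ} (hu : 0 < u)
    (h : IsMinOn (lqProxObjective lam q γ s) Set.univ u) :
    γ * (u - s) + lam * (q * u ^ (q - 1)) = 0 :=
  (h.isLocalMin Filter.univ_mem).hasDerivAt_eq_zero (hasDerivAt_of_pos hu)

lemma le_gamma_of_isMinOn {u : ℝ} (hq : 0 < q) (hu : 0 < u)
    (h : IsMinOn (lqProxObjective lam q γ s) Set.univ u) :
    2 * lam * (1 - q) * u ^ (q - 2) ≤ γ := by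
  have hfoc := deriv_eq_zero_of_isMinOn hu h
  have hzero : lqProxObjective lam q γ s u ≤ lqProxObjective lam q γ s 0 := h (Set.mem_univ _)
  simp only [lqProxObjective, abs_zero, Real.zero_rpow hq.ne', abs_of_pos hu] at hzero
  have hpow1 : u ^ (q - 1) * u = u ^ q := by
    rw [Real.rpow_sub_one hu.ne', div_mul_cancel₀ _ hu.ne']
  have hpow2 : u ^ (q - 2) * u ^ 2 = u ^ q := by
    rw [show q - 2 = q - (2 : ℕ) by norm_num, Real.rpow_sub_natCast hu.ne',
      div_mul_cancel₀ _ (by positivity)]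
  have hvalue : lam * (1 - q) * u ^ q ≤ γ / 2 * u ^ 2 := by
    linear_combination hzero - u * hfoc + lam * q * hpow1
  rw [← hpow2] at hvalue
  refine le_of_mul_le_mul_right ?_ (by positivity : 0 < u ^ 2)
  linear_combination 2 * hvalue

lemma le_gamma_of_isMinOn_abs {tbar : ℝ} (hq : 0 < q) (htbar : tbar ≠ 0)
    (h : IsMinOn (lqProxObjective lam q γ s) Set.univ tbar) :
    2 * lam * (1 - q) * |tbar| ^ (q - 2) ≤ γ := by
  obtain ⟨s', hs'⟩ := isMinOn_abs h
  exact le_gamma_of_isMinOn hq (abs_pos.mpr htbar) hs'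

end lqProxObjective

/-- uniform positive lower bound `ϖ` (depending only on `q, λ, υ, M`)
on the second derivative `h_{γ,s}''(t̄) = γ + λq(q−1)|t̄|^{q−2}` of
`h_{γ,s}(t) = (γ/2)(t−s)² + λ|t|^q` at any global minimizer `t̄` with
`υ ≤ |t̄| ≤ M`. -/
theorem stmt6 (q lam υ M : ℝ) (hq0 : 0 < q) (hq1 : q < 1) (hlam : 0 < lam)
    (hυ : 0 < υ) (hυM : υ < M) :
    ∃ ϖ > (0:ℝ), ∀ γ s tbar : ℝ, 0 < γ →
      (∀ t : ℝ, (γ / 2) * (tbar - s) ^ 2 + lam * |tbar| ^ q ≤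
        (γ / 2) * (t - s) ^ 2 + lam * |t| ^ q) →
      υ ≤ |tbar| → |tbar| ≤ M →
      ϖ ≤ γ + lam * q * (q - 1) * |tbar| ^ (q - 2) := by
  have hc : 0 < lam * (1 - q) * (2 - q) := by
    have : 0 < 1 - q := by linarith
    have : 0 < 2 - q := by linarith
    positivity
  have hM : 0 < M ^ (q - 2) := Real.rpow_pos_of_pos (hυ.trans hυM) _
  refine ⟨lam * (1 - q) * (2 - q) * M ^ (q - 2), mul_pos hc hM, ?_⟩
  intro γ s tbar _ hmin hυt htM
  have htbar : 0 < |tbar| := hυ.trans_le hυt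
  have hγ := lqProxObjective.le_gamma_of_isMinOn_abs hq0 (abs_pos.mp htbar)
    (fun t _ => hmin t)
  have hMt : M ^ (q - 2) ≤ |tbar| ^ (q - 2) :=
    Real.rpow_le_rpow_of_nonpos htbar htM (by linarith)
  calc lam * (1 - q) * (2 - q) * M ^ (q - 2)
      ≤ lam * (1 - q) * (2 - q) * |tbar| ^ (q - 2) := mul_le_mul_of_nonneg_left hMt hc.le
    _ = 2 * lam * (1 - q) * |tbar| ^ (q - 2) + lam * q * (q - 1) * |tbar| ^ (q - 2) := by ring
    _ ≤ γ + lam * q * (q - 1) * |tbar| ^ (q - 2) := add_le_add_left hγ _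
end

section
/- Let 0<q<1, λ>0, μ̄>0, ν>0 and ϖ>0. Let x, x̄ ∈ ℝⁿ∖{0} satisfy: |x̄_i| > ν for every i∈supp(x̄); |x_i| > ν/2 for every i∈supp(x); μ̄ + λq(q−1)|x̄|_min^{q−2} ≥ ϖ; and ‖x − x̄‖ ≤ min{ ν/3, 2^{q−3}ϖ / (2λq(1−q)(2−q)ν^{q−3}) }. Then sign(x_i) = sign(x̄_i) for every i∈{1,…,n} (in particular supp(x)=supp(x̄)), and μ̄ + λq(q−1)|x|_min^{q−2} ≥ (1/2)( μ̄ + λq(q−1)|x̄|_min^{q−2} ). -/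
/-- `|x|_min`: the smallest absolute value of the nonzero entries of `x`. -/
noncomputable def minAbs {n : ℕ} (x : EuclideanSpace ℝ (Fin n)) : ℝ :=
  sInf {t : ℝ | ∃ i, x i ≠ 0 ∧ t = |x i|}

/-!
Every coordinate moves by at most `δ = ‖x - x̄‖ ≤ ν/3`, while the nonzero entries of `x̄` exceed `ν`
and those of `x` exceed `ν/2`; so no entry changes sign, the supports agree, and
`|x̄|_min ≤ |x|_min + δ`. The map `u ↦ u^(q-2)` is convex and decreasing, so by the mean value
theorem it grows by at most `(2-q)(ν/2)^(q-3) δ` from `|x̄|_min` down to `|x|_min > ν/2`. The second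
bound on `δ` makes `λq(1-q)` times this at most `ϖ/2`, which is at most half of
`μ̄ + λq(q-1)|x̄|_min^(q-2)`.
-/

section MinAbs

variable {n : ℕ} {x y : EuclideanSpace ℝ (Fin n)}

lemma finite_setOf_abs_apply (x : EuclideanSpace ℝ (Fin n)) :
    {t : ℝ | ∃ i, x i ≠ 0 ∧ t = |x i|}.Finite :=
  (Set.finite_range fun i => |x i|).subset (by rintro _ ⟨i, -, rfl⟩; exact ⟨i, rfl⟩)

lemma minAbs_le_abs_apply {i : Fin n} (hi : x i ≠ 0) : minAbs x ≤ |x i| :=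
  csInf_le (finite_setOf_abs_apply x).bddBelow ⟨i, hi, rfl⟩

lemma exists_minAbs_eq_abs_apply (hx : x ≠ 0) : ∃ i, x i ≠ 0 ∧ minAbs x = |x i| := by
  obtain ⟨i, hi⟩ : ∃ i, x i ≠ 0 := by
    by_contra! h
    exact hx (PiLp.ext h)
  have hne : {t : ℝ | ∃ i, x i ≠ 0 ∧ t = |x i|}.Nonempty := ⟨|x i|, i, hi, rfl⟩
  exact hne.csInf_mem (finite_setOf_abs_apply x)

lemma lt_minAbs {ν : ℝ} (hx : x ≠ 0) (h : ∀ i, x i ≠ 0 → ν < |x i|) : ν < minAbs x := by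
  obtain ⟨i, hi, hmin⟩ := exists_minAbs_eq_abs_apply hx
  exact hmin ▸ h i hi

lemma minAbs_le_minAbs_add {δ : ℝ} (hx : x ≠ 0) (hsupp : ∀ i, x i ≠ 0 → y i ≠ 0)
    (h : ∀ i, |x i - y i| ≤ δ) : minAbs y ≤ minAbs x + δ := by
  obtain ⟨i, hi, hmin⟩ := exists_minAbs_eq_abs_apply hx
  have hyx := abs_sub_abs_le_abs_sub (y i) (x i)
  rw [abs_sub_comm] at hyx
  linarith [minAbs_le_abs_apply (hsupp i hi), h i]

end MinAbs

lemma Real.sign_eq_sign_of_abs_sub_le {a b ν : ℝ} (ha : a ≠ 0 → ν / 2 < |a|)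
    (hb : b ≠ 0 → ν < |b|) (hab : |a - b| ≤ ν / 2) : Real.sign a = Real.sign b := by
  obtain ⟨hab₁, hab₂⟩ := abs_le.mp hab
  rcases lt_trichotomy b 0 with hb0 | rfl | hb0
  · have hνb := hb hb0.ne
    rw [abs_of_neg hb0] at hνb
    rw [Real.sign_of_neg hb0, Real.sign_of_neg (by linarith)]
  · have : a = 0 := by
      by_contra ha0
      rw [sub_zero] at hab
      linarith [ha ha0]
    rw [this]
  · have hνb := hb hb0.ne'
    rw [abs_of_pos hb0] at hνb
    rw [Real.sign_of_pos hb0, Real.sign_of_pos (by linarith)]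

lemma rpow_sub_rpow_le_of_nonpos {p s t : ℝ} (hp : p ≤ 0) (hs : 0 < s) (hst : s ≤ t) :
    s ^ p - t ^ p ≤ -p * s ^ (p - 1) * (t - s) := by
  rcases hst.eq_or_lt with rfl | hlt
  · simp
  obtain ⟨c, ⟨hsc, -⟩, hc⟩ :=
    exists_hasDerivAt_eq_slope (fun u => u ^ p) (fun u => p * u ^ (p - 1)) hlt
      (fun u hu => (Real.hasDerivAt_rpow_const (Or.inl (hs.trans_le hu.1).ne')).continuousAt
        |>.continuousWithinAt)
      (fun u hu => Real.hasDerivAt_rpow_const (Or.inl (hs.trans hu.1).ne'))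
  rw [eq_div_iff (sub_pos.2 hlt).ne'] at hc
  have hcs : c ^ (p - 1) ≤ s ^ (p - 1) := Real.rpow_le_rpow_of_nonpos hs hsc.le (by linarith)
  nlinarith [mul_nonneg (mul_nonneg (neg_nonneg.2 hp) (sub_nonneg.2 hst)) (sub_nonneg.2 hcs)]

lemma half_le_curvature {q lam μb ν ϖ δ s t : ℝ} (hq0 : 0 < q) (hq1 : q < 1) (hlam : 0 < lam)
    (hν : 0 < ν) (hϖ : 0 < ϖ) (hs : ν / 2 < s) (ht : 0 < t) (hts : t ≤ s + δ)
    (hδ : δ ≤ (2:ℝ) ^ (q - 3) * ϖ / (2 * lam * q * (1 - q) * (2 - q) * ν ^ (q - 3)))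
    (hϖt : ϖ ≤ μb + lam * q * (q - 1) * t ^ (q - 2)) :
    (1 / 2) * (μb + lam * q * (q - 1) * t ^ (q - 2)) ≤ μb + lam * q * (q - 1) * s ^ (q - 2) := by
  have hs0 : 0 < s := by linarith
  have h1q : 0 < 1 - q := by linarith
  suffices lam * q * (q - 1) * t ^ (q - 2) - lam * q * (q - 1) * s ^ (q - 2) ≤ ϖ / 2 by linarith
  rcases le_or_gt t s with hle | hlt
  · have hst : s ^ (q - 2) ≤ t ^ (q - 2) := Real.rpow_le_rpow_of_nonpos ht hle (by linarith)
    have hneg : lam * q * (q - 1) ≤ 0 := by nlinarith [mul_pos hlam hq0]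
    linarith [mul_le_mul_of_nonpos_left hst hneg]
  have hmvt := rpow_sub_rpow_le_of_nonpos (p := q - 2) (by linarith) hs0 hlt.le
  rw [show q - 2 - 1 = q - 3 by ring, neg_sub] at hmvt
  have hsν : s ^ (q - 3) ≤ (ν / 2) ^ (q - 3) :=
    Real.rpow_le_rpow_of_nonpos (by positivity) hs.le (by linarith)
  have h2q : 0 < 2 - q := by linarith
  calc lam * q * (q - 1) * t ^ (q - 2) - lam * q * (q - 1) * s ^ (q - 2)
      = lam * q * (1 - q) * (s ^ (q - 2) - t ^ (q - 2)) := by ring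
    _ ≤ lam * q * (1 - q) * ((2 - q) * (ν / 2) ^ (q - 3) * δ) := by
        gcongr
        exact hmvt.trans (by gcongr; linarith)
    _ ≤ lam * q * (1 - q) * ((2 - q) * (ν / 2) ^ (q - 3) *
          ((2:ℝ) ^ (q - 3) * ϖ / (2 * lam * q * (1 - q) * (2 - q) * ν ^ (q - 3)))) := by
        gcongr
    _ = ϖ / 2 := by
        rw [Real.div_rpow hν.le zero_le_two]
        have := (Real.rpow_pos_of_pos hν (q - 3)).ne'
        have := (Real.rpow_pos_of_pos zero_lt_two (q - 3)).ne'
        field_simp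

theorem stmt7_general (n : ℕ) (q lam μb ν ϖ : ℝ) (hq0 : 0 < q) (hq1 : q < 1)
    (hlam : 0 < lam) (hν : 0 < ν) (hϖ : 0 < ϖ)
    (x xbar : EuclideanSpace ℝ (Fin n)) (hx : x ≠ 0) (hxbar : xbar ≠ 0)
    (h1 : ∀ i, xbar i ≠ 0 → ν < |xbar i|)
    (h2 : ∀ i, x i ≠ 0 → ν / 2 < |x i|)
    (h3 : ϖ ≤ μb + lam * q * (q - 1) * (minAbs xbar) ^ (q - 2))
    (h4 : ‖x - xbar‖ ≤ min (ν / 3)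
      ((2:ℝ) ^ (q - 3) * ϖ / (2 * lam * q * (1 - q) * (2 - q) * ν ^ (q - 3)))) :
    (∀ i, Real.sign (x i) = Real.sign (xbar i)) ∧
    (1 / 2) * (μb + lam * q * (q - 1) * (minAbs xbar) ^ (q - 2)) ≤
      μb + lam * q * (q - 1) * (minAbs x) ^ (q - 2) := by
  have hcoord : ∀ i, |x i - xbar i| ≤ ‖x - xbar‖ := fun i => by
    simpa using PiLp.norm_apply_le (x - xbar) i
  have hsign : ∀ i, Real.sign (x i) = Real.sign (xbar i) := fun i =>
    Real.sign_eq_sign_of_abs_sub_le (h2 i) (h1 i)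
      ((hcoord i).trans (h4.trans ((min_le_left _ _).trans (by linarith))))
  have hsupp : ∀ i, x i ≠ 0 → xbar i ≠ 0 := fun i hi h0 =>
    hi (Real.sign_eq_zero_iff.mp ((hsign i).trans (by rw [h0, Real.sign_zero])))
  exact ⟨hsign, half_le_curvature hq0 hq1 hlam hν hϖ (lt_minAbs hx h2)
    (hν.trans (lt_minAbs hxbar h1)) (minAbs_le_minAbs_add hx hsupp hcoord)
    (h4.trans (min_le_right _ _)) h3⟩

/-- sufficient condition for the switching criterion of HpgSRN:
sign stability `sign(x) = sign(x̄)` and the curvature lower bound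
`μ̄ + λq(q−1)|x|_min^{q−2} ≥ (1/2)(μ̄ + λq(q−1)|x̄|_min^{q−2})`. -/
theorem stmt7 (n : ℕ) (q lam μb ν ϖ : ℝ) (hq0 : 0 < q) (hq1 : q < 1)
    (hlam : 0 < lam) (hμb : 0 < μb) (hν : 0 < ν) (hϖ : 0 < ϖ)
    (x xbar : EuclideanSpace ℝ (Fin n)) (hx : x ≠ 0) (hxbar : xbar ≠ 0)
    (h1 : ∀ i, xbar i ≠ 0 → ν < |xbar i|)
    (h2 : ∀ i, x i ≠ 0 → ν / 2 < |x i|)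
    (h3 : ϖ ≤ μb + lam * q * (q - 1) * (minAbs xbar) ^ (q - 2))
    (h4 : ‖x - xbar‖ ≤ min (ν / 3)
      ((2:ℝ) ^ (q - 3) * ϖ / (2 * lam * q * (1 - q) * (2 - q) * ν ^ (q - 3)))) :
    (∀ i, Real.sign (x i) = Real.sign (xbar i)) ∧
    (1 / 2) * (μb + lam * q * (q - 1) * (minAbs xbar) ^ (q - 2)) ≤
      μb + lam * q * (q - 1) * (minAbs x) ^ (q - 2) :=
  stmt7_general n q lam μb ν ϖ hq0 hq1 hlam hν hϖ x xbar hx hxbar h1 h2 h3 h4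
end

section
/- Let s≥1, σ>0, b₁>1, b₂>0, ϱ∈(0,1/2], and let Φ:O→ℝ be twice continuously differentiable on an open convex set O⊆ℝ^s, with ‖∇²Φ(u')−∇²Φ(u'')‖ ≤ c̃₃‖u'−u''‖ (spectral norm) for all u',u''∈O. Let u∈O, r := ∇Φ(u) ≠ 0, H := ∇²Φ(u), ζ := max{−λ_min(H),0}, G := H + (b₁ζ + b₂‖r‖^σ)I (which is positive definite), and d := −G^{−1}r. Then for every t∈(0,1] such that the segment [u, u+td] lies in O and c̃₃ t² ‖d‖ ≤ b₂‖r‖^σ, the Armijo inequality Φ(u+td) ≤ Φ(u) + ϱ t ⟨r, d⟩ holds. -/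
/-!
Along the segment, Lipschitz continuity of the Hessian gives the cubic Taylor bound
`Φ(u + td) ≤ Φ(u) + t⟨r, d⟩ + t²⟨Hd, d⟩/2 + c̃₃ t³‖d‖³/6`, obtained by integrating the bound on
the second derivative of `τ ↦ Φ(u + τd)` twice. Since `ζ` dominates `−λ_min(H)` and `b₁ ≥ 1`,
`⟨Gd, d⟩ ≥ ⟨Hd, d⟩ + β‖d‖² ≥ β‖d‖²` with `β = b₂‖r‖^σ`, while `⟨r, d⟩ = −⟨Gd, d⟩`; the step-size
condition turns the cubic term into at most `tβ‖d‖²/6`, which the descent `(1 − ϱ)t⟨Gd, d⟩`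
absorbs.
-/

open Set InnerProductSpace ContinuousLinearMap

section

variable {E : Type*} [NormedAddCommGroup E] [InnerProductSpace ℝ E]

theorem le_taylor_cubic_of_hasDerivAt {φ φ' φ'' : ℝ → ℝ} {t a L : ℝ} (ht : 0 ≤ t)
    (hφ : ∀ τ ∈ Icc 0 t, HasDerivAt φ (φ' τ) τ) (hφ' : ∀ τ ∈ Icc 0 t, HasDerivAt φ' (φ'' τ) τ)
    (hφ'' : ∀ τ ∈ Icc 0 t, φ'' τ ≤ a + L * τ) :
    φ t ≤ φ 0 + φ' 0 * t + a / 2 * t ^ 2 + L / 6 * t ^ 3 := by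
  have hslope : ∀ τ ∈ Icc 0 t, φ' τ ≤ φ' 0 + a * τ + L / 2 * τ ^ 2 := by
    refine image_le_of_deriv_right_le_deriv_boundary (f' := φ'')
      (B := fun τ => φ' 0 + a * τ + L / 2 * τ ^ 2) (B' := fun τ => a + L * τ)
      (fun τ hτ => (hφ' τ hτ).continuousAt.continuousWithinAt)
      (fun τ hτ => (hφ' τ (Ico_subset_Icc_self hτ)).hasDerivWithinAt) (by simp)
      (by fun_prop) (fun τ _ => ?_) (fun τ hτ => hφ'' τ (Ico_subset_Icc_self hτ))
    exact ((((hasDerivAt_id' τ).const_mul a).const_add (φ' 0)).fun_add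
      ((hasDerivAt_pow 2 τ).const_mul (L / 2))).congr_deriv (by norm_num; ring) |>.hasDerivWithinAt
  refine image_le_of_deriv_right_le_deriv_boundary (f' := φ')
    (B := fun τ => φ 0 + φ' 0 * τ + a / 2 * τ ^ 2 + L / 6 * τ ^ 3)
    (B' := fun τ => φ' 0 + a * τ + L / 2 * τ ^ 2)
    (fun τ hτ => (hφ τ hτ).continuousAt.continuousWithinAt)
    (fun τ hτ => (hφ τ (Ico_subset_Icc_self hτ)).hasDerivWithinAt) (by simp)
    (by fun_prop) (fun τ _ => ?_) (fun τ hτ => hslope τ (Ico_subset_Icc_self hτ))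
    (right_mem_Icc.2 ht)
  exact (((((hasDerivAt_id' τ).const_mul (φ' 0)).const_add (φ 0)).fun_add
    ((hasDerivAt_pow 2 τ).const_mul (a / 2))).fun_add
      ((hasDerivAt_pow 3 τ).const_mul (L / 6))).congr_deriv (by norm_num; ring) |>.hasDerivWithinAt

theorem ContinuousLinearMap.real_inner_apply_le_add_norm_sub_mul_sq (T S : E →L[ℝ] E) (x : E) :
    ⟪T x, x⟫_ℝ ≤ ⟪S x, x⟫_ℝ + ‖T - S‖ * ‖x‖ ^ 2 := by
  have : ⟪(T - S) x, x⟫_ℝ ≤ ‖T - S‖ * ‖x‖ ^ 2 := calc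
    ⟪(T - S) x, x⟫_ℝ ≤ ‖(T - S) x‖ * ‖x‖ := real_inner_le_norm _ _
    _ ≤ ‖T - S‖ * ‖x‖ * ‖x‖ := by gcongr; exact (T - S).le_opNorm x
    _ = ‖T - S‖ * ‖x‖ ^ 2 := by ring
  rw [sub_apply, inner_sub_left] at this
  linarith

theorem ContinuousLinearMap.sInf_rayleigh_mul_norm_sq_le (T : E →L[ℝ] E) (v : E) :
    sInf {t | ∃ w : E, ‖w‖ = 1 ∧ t = ⟪w, T w⟫_ℝ} * ‖v‖ ^ 2 ≤ ⟪v, T v⟫_ℝ := by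
  rcases eq_or_ne v 0 with rfl | hv
  · simp
  set w := ‖v‖⁻¹ • v
  have hbdd : BddBelow {t | ∃ w : E, ‖w‖ = 1 ∧ t = ⟪w, T w⟫_ℝ} := by
    refine ⟨-‖T‖, ?_⟩
    rintro _ ⟨w, hw, rfl⟩
    simpa [hw, real_inner_comm, neg_le_iff_add_nonneg', add_comm] using
      (0 : E →L[ℝ] E).real_inner_apply_le_add_norm_sub_mul_sq T w
  have hle := csInf_le hbdd ⟨w, norm_smul_inv_norm hv, rfl⟩
  have hvw : v = ‖v‖ • w := by simp [w, smul_smul, hv]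
  calc _ ≤ ⟪w, T w⟫_ℝ * ‖v‖ ^ 2 := by gcongr
    _ = ⟪v, T v⟫_ℝ := by
      conv_rhs => rw [hvw, map_smul, real_inner_smul_left, real_inner_smul_right]
      ring

theorem ContinuousLinearMap.real_inner_regularized_apply_bounds (H : E →L[ℝ] E)
    {lmin b₁ β : ℝ} (hb₁ : 1 ≤ b₁) (hH : ∀ v, lmin * ‖v‖ ^ 2 ≤ ⟪v, H v⟫_ℝ) (v : E) :
    β * ‖v‖ ^ 2 ≤ ⟪(H + (b₁ * max (-lmin) 0 + β) • ContinuousLinearMap.id ℝ E) v, v⟫_ℝ ∧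
      ⟪H v, v⟫_ℝ + β * ‖v‖ ^ 2 ≤ ⟪(H + (b₁ * max (-lmin) 0 + β) • ContinuousLinearMap.id ℝ E) v, v⟫_ℝ := by
  rw [add_apply, inner_add_left, smul_apply, real_inner_smul_left, ContinuousLinearMap.id_apply,
    real_inner_self_eq_norm_sq, real_inner_comm]
  have hshift : 0 ≤ max (-lmin) 0 * ‖v‖ ^ 2 := by positivity
  have hexcess : 0 ≤ (b₁ - 1) * (max (-lmin) 0 * ‖v‖ ^ 2) := mul_nonneg (by linarith) hshift
  have hdom := mul_le_mul_of_nonneg_right (le_max_left (-lmin) 0) (sq_nonneg ‖v‖)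
  constructor <;> linarith [hH v]

variable [CompleteSpace E]

theorem ContDiffAt.differentiableAt_gradient {f : E → ℝ} {x : E} (hf : ContDiffAt ℝ 2 f x) :
    DifferentiableAt ℝ (gradient f) x :=
  ((toDual ℝ E).symm.toLinearIsometry.toContinuousLinearMap.differentiableAt).comp x
    ((hf.fderiv_right (m := 1) (by norm_num)).differentiableAt one_ne_zero)

theorem le_taylor_of_norm_fderiv_gradient_sub_le {O : Set E} (hO : IsOpen O) {Φ : E → ℝ}
    (hΦ : ContDiffOn ℝ 2 Φ O) {u d : E} (hseg : segment ℝ u (u + d) ⊆ O) {c : ℝ}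
    (hLip : ∀ v ∈ segment ℝ u (u + d),
      ‖fderiv ℝ (gradient Φ) v - fderiv ℝ (gradient Φ) u‖ ≤ c * ‖v - u‖) :
    Φ (u + d) ≤ Φ u + ⟪gradient Φ u, d⟫_ℝ + ⟪fderiv ℝ (gradient Φ) u d, d⟫_ℝ / 2
      + c * ‖d‖ ^ 3 / 6 := by
  have hmem : ∀ τ ∈ Icc (0 : ℝ) 1, u + τ • d ∈ segment ℝ u (u + d) := fun τ hτ => by
    rw [segment_eq_image']
    exact ⟨τ, hτ, by simp⟩
  have hC2 : ∀ τ ∈ Icc (0 : ℝ) 1, ContDiffAt ℝ 2 Φ (u + τ • d) := fun τ hτ =>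
    hΦ.contDiffAt (hO.mem_nhds (hseg (hmem τ hτ)))
  have hline : ∀ τ : ℝ, HasDerivAt (fun τ : ℝ => u + τ • d) d τ := fun τ => by
    simpa using ((hasDerivAt_id τ).smul_const d).const_add u
  have h := le_taylor_cubic_of_hasDerivAt (φ := fun τ : ℝ => Φ (u + τ • d))
    (φ' := fun τ => ⟪gradient Φ (u + τ • d), d⟫_ℝ)
    (φ'' := fun τ => ⟪fderiv ℝ (gradient Φ) (u + τ • d) d, d⟫_ℝ)
    (a := ⟪fderiv ℝ (gradient Φ) u d, d⟫_ℝ) (L := c * ‖d‖ ^ 3) zero_le_one ?_ ?_ ?_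
  · simpa [div_eq_mul_inv, mul_comm, mul_left_comm, mul_assoc] using h
  · intro τ hτ
    have h := ((hC2 τ hτ).differentiableAt two_ne_zero).hasFDerivAt.comp_hasDerivAt τ (hline τ)
    rwa [← inner_gradient_left] at h
  · intro τ hτ
    simpa using ((hC2 τ hτ).differentiableAt_gradient.hasFDerivAt.comp_hasDerivAt τ
      (hline τ)).inner ℝ (hasDerivAt_const τ d)
  · intro τ hτ
    have hdist := hLip _ (hmem τ hτ)
    rw [add_sub_cancel_left, norm_smul, Real.norm_of_nonneg hτ.1] at hdist
    calc _ ≤ _ := (fderiv ℝ (gradient Φ) (u + τ • d)).real_inner_apply_le_add_norm_sub_mul_sq _ d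
      _ ≤ ⟪fderiv ℝ (gradient Φ) u d, d⟫_ℝ + c * (τ * ‖d‖) * ‖d‖ ^ 2 := by gcongr
      _ = _ := by ring

end

theorem stmt9_general (s : ℕ) (σ b₁ b₂ ϱ c₃ : ℝ)
    (hb₁ : 1 < b₁) (hb₂ : 0 < b₂) (hϱ : ϱ ≤ 1 / 2)
    (O : Set (EuclideanSpace ℝ (Fin s))) (hOopen : IsOpen O)
    (Φ : EuclideanSpace ℝ (Fin s) → ℝ) (hΦ : ContDiffOn ℝ 2 Φ O)
    (hLip : ∀ v ∈ O, ∀ w ∈ O,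
      ‖fderiv ℝ (gradient Φ) v - fderiv ℝ (gradient Φ) w‖ ≤ c₃ * ‖v - w‖)
    (u : EuclideanSpace ℝ (Fin s))
    (r : EuclideanSpace ℝ (Fin s)) (hr : r = gradient Φ u)
    (H : EuclideanSpace ℝ (Fin s) →L[ℝ] EuclideanSpace ℝ (Fin s))
    (hH : H = fderiv ℝ (gradient Φ) u)
    (lmin ζ : ℝ)
    (hlmin : lmin = sInf {t : ℝ | ∃ v : EuclideanSpace ℝ (Fin s),
      ‖v‖ = 1 ∧ t = (inner ℝ v (H v) : ℝ)})
    (hζ : ζ = max (-lmin) 0)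
    (G : EuclideanSpace ℝ (Fin s) →L[ℝ] EuclideanSpace ℝ (Fin s))
    (hG : G = H + (b₁ * ζ + b₂ * ‖r‖ ^ σ) • ContinuousLinearMap.id ℝ (EuclideanSpace ℝ (Fin s)))
    (d : EuclideanSpace ℝ (Fin s)) (hd : G d = -r) :
    ∀ t : ℝ, 0 < t → t ≤ 1 → segment ℝ u (u + t • d) ⊆ O →
      c₃ * t ^ 2 * ‖d‖ ≤ b₂ * ‖r‖ ^ σ →
      Φ (u + t • d) ≤ Φ u + ϱ * t * (inner ℝ r d : ℝ) := by
  intro t ht0 ht1 hseg hstep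
  set β := b₂ * ‖r‖ ^ σ
  have hβ : 0 ≤ β := mul_nonneg hb₂.le (Real.rpow_nonneg (norm_nonneg r) σ)
  obtain ⟨hGβ, hHG⟩ : β * ‖d‖ ^ 2 ≤ ⟪G d, d⟫_ℝ ∧ ⟪H d, d⟫_ℝ + β * ‖d‖ ^ 2 ≤ ⟪G d, d⟫_ℝ := by
    rw [hG, hζ]
    exact H.real_inner_regularized_apply_bounds hb₁.le
      (fun v => hlmin ▸ H.sInf_rayleigh_mul_norm_sq_le v) d
  have hrd : ⟪r, d⟫_ℝ = -⟪G d, d⟫_ℝ := by rw [hd, inner_neg_left, neg_neg]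
  have htaylor := le_taylor_of_norm_fderiv_gradient_sub_le hOopen hΦ hseg
    fun v hv => hLip v (hseg hv) u (hseg (left_mem_segment ℝ _ _))
  rw [← hr, ← hH, map_smul, real_inner_smul_left, real_inner_smul_right, real_inner_smul_right,
    norm_smul, Real.norm_of_nonneg ht0.le, hrd] at htaylor
  have hcubic : c₃ * (t * ‖d‖) ^ 3 ≤ t * β * ‖d‖ ^ 2 := by
    linarith [mul_le_mul_of_nonneg_right hstep (by positivity : 0 ≤ t * ‖d‖ ^ 2)]
  rw [hrd]
  -- `ϱ ≤ 1/2` leaves at least `(5/6 - ϱ) t β ‖d‖²` of descent to absorb the cubic term.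
  linarith [mul_nonneg (mul_nonneg ht0.le (by linarith : 0 ≤ 1 - ϱ - t / 2)) (sub_nonneg.2 hGβ),
    mul_nonneg (by linarith : (0 : ℝ) ≤ 5 / 6 - ϱ) (by positivity : 0 ≤ t * β * ‖d‖ ^ 2),
    mul_le_mul_of_nonneg_left hHG (sq_nonneg t)]

/-- Armijo decrease along the regularized Newton direction.
With `r = ∇Φ(u) ≠ 0`, `H = ∇²Φ(u)`, `ζ = [−λ_min(H)]₊` (`λ_min` expressed as the
infimum of the Rayleigh quotient over the unit sphere),
`G = H + (b₁ζ + b₂‖r‖^σ)I` and `d = −G⁻¹r`, every step size `t ∈ (0,1]` with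
`[u, u+td] ⊆ O` and `c̃₃ t² ‖d‖ ≤ b₂‖r‖^σ` satisfies the Armijo inequality
`Φ(u+td) ≤ Φ(u) + ϱ t ⟨r, d⟩`. -/
theorem stmt9 (s : ℕ) (hs : 0 < s) (σ b₁ b₂ ϱ c₃ : ℝ)
    (hσ : 0 < σ) (hb₁ : 1 < b₁) (hb₂ : 0 < b₂) (hϱ0 : 0 < ϱ) (hϱ : ϱ ≤ 1 / 2)
    (O : Set (EuclideanSpace ℝ (Fin s))) (hOopen : IsOpen O) (hOconv : Convex ℝ O)
    (Φ : EuclideanSpace ℝ (Fin s) → ℝ) (hΦ : ContDiffOn ℝ 2 Φ O)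
    (hLip : ∀ v ∈ O, ∀ w ∈ O,
      ‖fderiv ℝ (gradient Φ) v - fderiv ℝ (gradient Φ) w‖ ≤ c₃ * ‖v - w‖)
    (u : EuclideanSpace ℝ (Fin s)) (hu : u ∈ O)
    (r : EuclideanSpace ℝ (Fin s)) (hr : r = gradient Φ u) (hr0 : r ≠ 0)
    (H : EuclideanSpace ℝ (Fin s) →L[ℝ] EuclideanSpace ℝ (Fin s))
    (hH : H = fderiv ℝ (gradient Φ) u)
    (lmin ζ : ℝ)
    (hlmin : lmin = sInf {t : ℝ | ∃ v : EuclideanSpace ℝ (Fin s),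
      ‖v‖ = 1 ∧ t = (inner ℝ v (H v) : ℝ)})
    (hζ : ζ = max (-lmin) 0)
    (G : EuclideanSpace ℝ (Fin s) →L[ℝ] EuclideanSpace ℝ (Fin s))
    (hG : G = H + (b₁ * ζ + b₂ * ‖r‖ ^ σ) • ContinuousLinearMap.id ℝ (EuclideanSpace ℝ (Fin s)))
    (d : EuclideanSpace ℝ (Fin s)) (hd : G d = -r) :
    ∀ t : ℝ, 0 < t → t ≤ 1 → segment ℝ u (u + t • d) ⊆ O →
      c₃ * t ^ 2 * ‖d‖ ≤ b₂ * ‖r‖ ^ σ →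
      Φ (u + t • d) ≤ Φ u + ϱ * t * (inner ℝ r d : ℝ) :=
  stmt9_general s σ b₁ b₂ ϱ c₃ hb₁ hb₂ hϱ O hOopen Φ hΦ hLip u r hr H hH lmin ζ hlmin hζ G hG d hd
end

section
/- Let f:ℝ^m→ℝ be twice continuously differentiable, A∈ℝ^{m×n}, ψ(x):=f(Ax), λ>0, 0<q<1, g(x):=∑_{i=1}^n|x_i|^q, and μ̄>0, L̂>0, ĉ₂>0. Let x∈ℝⁿ∖{0} and let x̄ be a global minimizer over ℝⁿ of z ↦ ⟨∇ψ(x), z−x⟩ + (μ̄/2)‖z−x‖² + λg(z). Suppose sign(x_i)=sign(x̄_i) for all i, and set S:=supp(x). If ‖∇ψ(x)−∇ψ(x̄)‖ ≤ L̂‖x−x̄‖ and ‖∇²F_S(x̄_S + τ(x_S − x̄_S))‖ ≤ ĉ₂ for all τ∈[0,1], then ‖∇F_S(x_S)‖ ≤ (L̂ + μ̄ + ĉ₂)‖x − x̄‖. -/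
/-!
As `sign x = sign x̄`, the point `x̄` vanishes off `S` and has no zero coordinate on `S`, so the
prox objective is differentiable at `x̄` along the coordinates of `S`, and its first-order
condition there reads `∇ψ(x)_S + μ̄ (x̄ - x)_S + λ q sign(x̄_S) |x̄_S|^(q-1) = 0`. Together with
`A_S x̄_S = A x̄` this gives `∇F_S(x̄_S) = (∇ψ(x̄) - ∇ψ(x) + μ̄ (x - x̄))_S`, whose norm is at most
`(L̂ + μ̄) ‖x - x̄‖`. The segment from `x̄_S` to `x_S` stays off the coordinate hyperplanes, where
`F_S` is `C²`, so the mean value inequality bounds `‖∇F_S(x_S) - ∇F_S(x̄_S)‖` by `ĉ₂ ‖x - x̄‖`.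
-/

open InnerProductSpace Set

namespace Real

lemma mul_pos_of_sign_eq {a b : ℝ} (h : sign a = sign b) (ha : a ≠ 0) : 0 < a * b := by
  have hb : b ≠ 0 := fun hb => ha (sign_eq_zero_iff.1 (h.trans (hb ▸ sign_zero)))
  have hpos := mul_pos (sign_mul_pos_of_ne_zero a ha) (sign_mul_pos_of_ne_zero b hb)
  rcases sign_apply_eq_of_ne_zero a ha with hs | hs <;> rw [← h, hs] at hpos <;> linarith

lemma add_mul_sub_ne_zero_of_sign_eq {a b τ : ℝ} (h : sign a = sign b) (ha : a ≠ 0)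
    (hτ : τ ∈ Icc 0 1) : b + τ * (a - b) ≠ 0 := by
  have hab := mul_pos_of_sign_eq h ha
  have ha2 : 0 < a * a := mul_self_pos.2 ha
  intro h0
  have : (b + τ * (a - b)) * a = 0 := by rw [h0, zero_mul]
  nlinarith [hτ.1, hτ.2, mul_nonneg hτ.1 ha2.le, mul_nonneg (sub_nonneg.2 hτ.2) hab.le]

lemma hasDerivAt_abs_rpow {q c : ℝ} (hc : c ≠ 0) :
    HasDerivAt (fun s : ℝ => |s| ^ q) (q * |c| ^ (q - 1) * sign c) c := by
  have hsign : (SignType.sign c : ℝ) = sign c := by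
    rcases hc.lt_or_gt with h | h
    · simp [sign_of_neg h, h]
    · simp [sign_of_pos h, h]
  rw [← hsign]
  exact (hasDerivAt_rpow_const (Or.inl (abs_ne_zero.2 hc))).comp c (hasDerivAt_abs hc)

end Real

section Penalty

variable {ι : Type*} [Fintype ι]

lemma contDiffAt_sum_abs_rpow {q : ℝ} {u : EuclideanSpace ℝ ι} (hu : ∀ i, u i ≠ 0)
    {n : ℕ∞} : ContDiffAt ℝ n (fun v : EuclideanSpace ℝ ι => ∑ i, |v i| ^ q) u := by
  refine ContDiffAt.sum fun i _ => ?_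
  have habs := (contDiffAt_abs (n := n) (hu i)).comp u
    (EuclideanSpace.proj (𝕜 := ℝ) i).contDiff.contDiffAt
  exact (Real.contDiffAt_rpow_const_of_ne (abs_ne_zero.2 (hu i))).comp u habs

variable [DecidableEq ι]

lemma hasLineDerivAt_sum_abs_rpow_single {q : ℝ} {u : EuclideanSpace ℝ ι} {i : ι}
    (hu : u i ≠ 0) :
    HasLineDerivAt ℝ (fun v : EuclideanSpace ℝ ι => ∑ j, |v j| ^ q)
      (q * |u i| ^ (q - 1) * Real.sign (u i)) u (EuclideanSpace.single i 1) := by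
  have hterm : ∀ j ∈ Finset.univ, HasDerivAt
      (fun t : ℝ => |(u + t • EuclideanSpace.single i (1 : ℝ)) j| ^ q)
      (if j = i then q * |u i| ^ (q - 1) * Real.sign (u i) else 0) 0 := by
    intro j _
    by_cases hj : j = i
    · subst hj
      have hline : HasDerivAt (fun t : ℝ => u j + t) 1 0 := (hasDerivAt_id 0).const_add _
      simpa [Function.comp_def] using (Real.hasDerivAt_abs_rpow (by simpa using hu)).comp 0 hline
    · simpa [hj] using hasDerivAt_const (0 : ℝ) (|u j| ^ q)
  simpa [HasLineDerivAt] using HasDerivAt.fun_sum hterm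

end Penalty

section Prox

variable {ι : Type*} [Fintype ι]

noncomputable def proxObjective (g x : EuclideanSpace ℝ ι) (μ lam q : ℝ)
    (z : EuclideanSpace ℝ ι) : ℝ :=
  inner ℝ g (z - x) + μ / 2 * ‖z - x‖ ^ 2 + lam * ∑ i, |z i| ^ q

variable [DecidableEq ι]

lemma proxObjective_hasLineDerivAt_single {g x z : EuclideanSpace ℝ ι} {μ lam q : ℝ} {i : ι}
    (hz : z i ≠ 0) :
    HasLineDerivAt ℝ (proxObjective g x μ lam q)
      (g i + μ * (z i - x i) + lam * (q * |z i| ^ (q - 1) * Real.sign (z i)))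
      z (EuclideanSpace.single i 1) := by
  set e := EuclideanSpace.single i (1 : ℝ)
  have hline : HasDerivAt (fun t : ℝ => z + t • e - x) e 0 := by
    simpa using (((hasDerivAt_id (0 : ℝ)).smul_const e).const_add z).sub_const x
  have hlin : HasDerivAt (fun t : ℝ => inner ℝ g (z + t • e - x)) (g i) 0 := by
    simpa [e, EuclideanSpace.inner_single_right] using (hasDerivAt_const (0 : ℝ) g).inner ℝ hline
  have hquad : HasDerivAt (fun t : ℝ => μ / 2 * ‖z + t • e - x‖ ^ 2) (μ * (z i - x i)) 0 := by
    refine (hline.norm_sq.const_mul (μ / 2)).congr_deriv ?_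
    simp [e, EuclideanSpace.inner_single_right]
    ring
  exact (hlin.add hquad).add ((hasLineDerivAt_sum_abs_rpow_single hz).const_mul lam)

lemma proxObjective_first_order {g x xbar : EuclideanSpace ℝ ι} {μ lam q : ℝ}
    (hmin : ∀ z, proxObjective g x μ lam q xbar ≤ proxObjective g x μ lam q z) {i : ι}
    (hi : xbar i ≠ 0) :
    g i + μ * (xbar i - x i) + lam * (q * |xbar i| ^ (q - 1) * Real.sign (xbar i)) = 0 :=
  IsLocalMin.hasLineDerivAt_eq_zero (Filter.Eventually.of_forall hmin)
    (proxObjective_hasLineDerivAt_single hi)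

end Prox

section Gradient

variable {E : Type*} [NormedAddCommGroup E] [InnerProductSpace ℝ E] [CompleteSpace E]

lemma ContDiffAt.differentiableAt_gradient_s10 {F : E → ℝ} {u : E} (hF : ContDiffAt ℝ 2 F u) :
    DifferentiableAt ℝ (gradient F) u := by
  have hF' : DifferentiableAt ℝ (fderiv ℝ F) u :=
    (hF.fderiv_right (m := 1) (by norm_num)).differentiableAt one_ne_zero
  exact (toDual ℝ E).symm.toContinuousLinearEquiv.differentiableAt.comp u hF'

lemma norm_gradient_sub_le_of_norm_fderiv_gradient_le {F : E → ℝ} {a b : E} {C : ℝ}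
    (hF : ∀ τ ∈ Icc (0 : ℝ) 1, ContDiffAt ℝ 2 F (a + τ • (b - a)))
    (hC : ∀ τ ∈ Icc (0 : ℝ) 1, ‖fderiv ℝ (gradient F) (a + τ • (b - a))‖ ≤ C) :
    ‖gradient F b - gradient F a‖ ≤ C * ‖b - a‖ := by
  have hseg : ∀ y ∈ segment ℝ a b, ∃ τ ∈ Icc (0 : ℝ) 1, a + τ • (b - a) = y := fun y hy => by
    rwa [segment_eq_image'] at hy
  refine Convex.norm_image_sub_le_of_norm_fderiv_le (𝕜 := ℝ) (fun y hy => ?_) (fun y hy => ?_)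
    (convex_segment a b) (left_mem_segment ℝ a b) (right_mem_segment ℝ a b)
  · obtain ⟨τ, hτ, rfl⟩ := hseg y hy
    exact (hF τ hτ).differentiableAt_gradient_s10
  · obtain ⟨τ, hτ, rfl⟩ := hseg y hy
    exact hC τ hτ

variable {ι : Type*} [Fintype ι] [DecidableEq ι]

lemma EuclideanSpace.gradient_apply_of_hasLineDerivAt {F : EuclideanSpace ℝ ι → ℝ}
    {u : EuclideanSpace ℝ ι} {i : ι} {d : ℝ} (hF : DifferentiableAt ℝ F u)
    (h : HasLineDerivAt ℝ F d u (EuclideanSpace.single i 1)) : gradient F u i = d := by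
  have hcoord : gradient F u i = fderiv ℝ F u (EuclideanSpace.single i 1) := by
    rw [← inner_gradient_left, EuclideanSpace.inner_single_right]
    simp
  rw [hcoord]
  exact (hF.hasFDerivAt.hasLineDerivAt _).unique h

variable {G : Type*} [NormedAddCommGroup G] [NormedSpace ℝ G]

lemma gradient_comp_clm_apply {f : G → ℝ} (B : EuclideanSpace ℝ ι →L[ℝ] G)
    {u : EuclideanSpace ℝ ι} (hf : DifferentiableAt ℝ f (B u)) (i : ι) :
    gradient (fun v => f (B v)) u i = fderiv ℝ f (B u) (B (EuclideanSpace.single i 1)) :=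
  have hfB := hf.hasFDerivAt.comp u B.hasFDerivAt
  EuclideanSpace.gradient_apply_of_hasLineDerivAt hfB.differentiableAt (hfB.hasLineDerivAt _)

lemma gradient_comp_clm_add_sum_abs_rpow_apply {f : G → ℝ} (B : EuclideanSpace ℝ ι →L[ℝ] G)
    {lam q : ℝ} {u : EuclideanSpace ℝ ι} (hu : ∀ j, u j ≠ 0) (hf : DifferentiableAt ℝ f (B u))
    (i : ι) :
    gradient (fun v => f (B v) + lam * ∑ j, |v j| ^ q) u i
      = fderiv ℝ f (B u) (B (EuclideanSpace.single i 1))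
        + lam * (q * |u i| ^ (q - 1) * Real.sign (u i)) := by
  have hfB := hf.hasFDerivAt.comp u B.hasFDerivAt
  have hpen : DifferentiableAt ℝ (fun v : EuclideanSpace ℝ ι => ∑ j, |v j| ^ q) u :=
    (contDiffAt_sum_abs_rpow hu (n := 1)).differentiableAt one_ne_zero
  refine EuclideanSpace.gradient_apply_of_hasLineDerivAt
    (hfB.differentiableAt.add (hpen.const_mul lam)) ?_
  exact (hfB.hasLineDerivAt _).add ((hasLineDerivAt_sum_abs_rpow_single (hu i)).const_mul lam)

end Gradient

section Restrict

variable {ι : Type*} [Fintype ι] {S : Finset ι}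

lemma Matrix.subtype_mulVec_eq_mulVec {κ R : Type*} [NonUnitalNonAssocSemiring R]
    {A : Matrix κ ι R} {AS : Matrix κ S R} (hAS : ∀ j i, AS j i = A j i) {v : ι → R}
    {vS : S → R} (hvS : ∀ i, vS i = v i) (hv : ∀ i ∉ S, v i = 0) : AS.mulVec vS = A.mulVec v := by
  ext j
  simp only [Matrix.mulVec, dotProduct, hAS, hvS]
  rw [Finset.sum_coe_sort S (fun i => A j i * v i)]
  exact Finset.sum_subset (Finset.subset_univ S) fun i _ hi => by rw [hv i hi, mul_zero]

lemma Matrix.subtype_mulVec_single {κ R : Type*} [NonUnitalNonAssocSemiring R] [One R]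
    [DecidableEq ι] {A : Matrix κ ι R} {AS : Matrix κ S R} (hAS : ∀ j i, AS j i = A j i)
    (i : S) : AS.mulVec (Pi.single i 1) = A.mulVec (Pi.single i.1 1) :=
  Matrix.subtype_mulVec_eq_mulVec hAS (fun k => by simp [Pi.single_apply])
    (fun k hk => Pi.single_eq_of_ne (fun h : k = i.1 => hk (h ▸ i.2)) _)

lemma EuclideanSpace.norm_subtype_le {v : EuclideanSpace ℝ ι} {vS : EuclideanSpace ℝ S}
    (h : ∀ i, vS i = v i) : ‖vS‖ ≤ ‖v‖ := by
  rw [EuclideanSpace.norm_eq, EuclideanSpace.norm_eq]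
  gcongr
  calc ∑ i : S, ‖vS i‖ ^ 2 = ∑ i ∈ S, ‖v i‖ ^ 2 := by
        simp only [h]; exact Finset.sum_coe_sort S (fun i => ‖v i‖ ^ 2)
    _ ≤ ∑ i, ‖v i‖ ^ 2 :=
        Finset.sum_le_sum_of_subset_of_nonneg (Finset.subset_univ S) fun _ _ _ => by positivity

end Restrict

lemma gradient_subtype_objective_eq_of_isMin_proxObjective {ι κ : Type*} [Fintype ι]
    [DecidableEq ι] [Fintype κ] {S : Finset ι} {f : EuclideanSpace ℝ κ → ℝ}
    (hf : Differentiable ℝ f) {A : Matrix κ ι ℝ} {AS : Matrix κ S ℝ}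
    (hAS : ∀ j i, AS j i = A j i) {lam q μ : ℝ} {ψ : EuclideanSpace ℝ ι → ℝ}
    (hψ : ∀ y, ψ y = f (WithLp.toLp 2 (A.mulVec y))) {FS : EuclideanSpace ℝ S → ℝ}
    (hFS : ∀ u, FS u = f (WithLp.toLp 2 (AS.mulVec u)) + lam * ∑ i, |u i| ^ q)
    {g x xbar : EuclideanSpace ℝ ι}
    (hmin : ∀ z, proxObjective g x μ lam q xbar ≤ proxObjective g x μ lam q z)
    {xbarS : EuclideanSpace ℝ S} (hxbarS : ∀ i, xbarS i = xbar i) (hne : ∀ i, xbarS i ≠ 0)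
    (hoff : ∀ i ∉ S, xbar i = 0) (i : S) :
    gradient FS xbarS i = (gradient ψ xbar - g + μ • (x - xbar)) i := by
  obtain rfl : ψ = _ := funext hψ
  obtain rfl : FS = _ := funext hFS
  let B := LinearMap.toContinuousLinearMap (Matrix.toEuclideanLin A)
  let BS := LinearMap.toContinuousLinearMap (Matrix.toEuclideanLin AS)
  have hB_xbar : BS xbarS = B xbar :=
    congrArg (WithLp.toLp 2) (Matrix.subtype_mulVec_eq_mulVec hAS hxbarS hoff)
  have hB_single : BS (EuclideanSpace.single i 1) = B (EuclideanSpace.single i.1 1) :=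
    congrArg (WithLp.toLp 2) (Matrix.subtype_mulVec_single hAS i)
  have hopt := proxObjective_first_order hmin (i := i.1) (hxbarS i ▸ hne i)
  change gradient (fun u => f (BS u) + lam * ∑ j, |u j| ^ q) xbarS i
    = (gradient (fun y => f (B y)) xbar - g + μ • (x - xbar)) i
  rw [gradient_comp_clm_add_sum_abs_rpow_apply BS hne (hf _), hB_xbar, hB_single, hxbarS]
  simp only [PiLp.add_apply, PiLp.sub_apply, PiLp.smul_apply, smul_eq_mul,
    gradient_comp_clm_apply B (hf _)]
  linarith

theorem stmt10_general (m n : ℕ) (q lam μb Lhat c₂ : ℝ)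
    (hμb : 0 < μb) (hc₂ : 0 < c₂)
    (f : EuclideanSpace ℝ (Fin m) → ℝ) (hf : ContDiff ℝ 2 f)
    (A : Matrix (Fin m) (Fin n) ℝ)
    (ψ : EuclideanSpace ℝ (Fin n) → ℝ) (hψ : ∀ y, ψ y = f (WithLp.toLp 2 (A.mulVec y)))
    (x xbar : EuclideanSpace ℝ (Fin n))
    (hmin : ∀ z : EuclideanSpace ℝ (Fin n),
      (inner ℝ (gradient ψ x) (xbar - x) : ℝ) + (μb / 2) * ‖xbar - x‖ ^ 2
          + lam * ∑ i, |xbar i| ^ q ≤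
        (inner ℝ (gradient ψ x) (z - x) : ℝ) + (μb / 2) * ‖z - x‖ ^ 2
          + lam * ∑ i, |z i| ^ q)
    (hsign : ∀ i, Real.sign (x i) = Real.sign (xbar i))
    (S : Finset (Fin n)) (hSdef : ∀ i, i ∈ S ↔ x i ≠ 0)
    (AS : Matrix (Fin m) {i // i ∈ S} ℝ) (hAS : ∀ j i, AS j i = A j i.1)
    (xS xbarS : EuclideanSpace ℝ {i // i ∈ S})
    (hxS : ∀ i, xS i = x i.1) (hxbarS : ∀ i, xbarS i = xbar i.1)
    (FS : EuclideanSpace ℝ {i // i ∈ S} → ℝ)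
    (hFS : ∀ u, FS u = f (WithLp.toLp 2 (AS.mulVec u)) + lam * ∑ i, |u i| ^ q)
    (hgradLip : ‖gradient ψ x - gradient ψ xbar‖ ≤ Lhat * ‖x - xbar‖)
    (hHess : ∀ τ ∈ Set.Icc (0:ℝ) 1,
      ‖fderiv ℝ (gradient FS) (xbarS + τ • (xS - xbarS))‖ ≤ c₂) :
    ‖gradient FS xS‖ ≤ (Lhat + μb + c₂) * ‖x - xbar‖ := by
  have hxbar_off : ∀ i ∉ S, xbar i = 0 := fun i hi => by
    have hxi : x i = 0 := not_not.1 (mt (hSdef i).2 hi)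
    simpa [hxi, eq_comm (a := (0 : ℝ))] using hsign i
  have hseg : ∀ τ ∈ Icc (0 : ℝ) 1, ∀ i, (xbarS + τ • (xS - xbarS)) i ≠ 0 := fun τ hτ i => by
    simpa [hxS, hxbarS] using
      Real.add_mul_sub_ne_zero_of_sign_eq (hsign i) ((hSdef i).1 i.2) hτ
  have hgrad_xbar : ∀ i : S,
      gradient FS xbarS i = (gradient ψ xbar - gradient ψ x + μb • (x - xbar)) i.1 :=
    gradient_subtype_objective_eq_of_isMin_proxObjective (hf.differentiable (by norm_num)) hAS hψ
      hFS hmin hxbarS (by simpa using hseg 0 (by simp)) hxbar_off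
  have hFS_C2 : ∀ τ ∈ Icc (0 : ℝ) 1, ContDiffAt ℝ 2 FS (xbarS + τ • (xS - xbarS)) := fun τ hτ => by
    rw [funext hFS]
    exact (hf.comp (Matrix.toEuclideanLin AS).toContinuousLinearMap.contDiff).contDiffAt.add
      (contDiffAt_const.mul (contDiffAt_sum_abs_rpow (n := 2) (hseg τ hτ)))
  calc ‖gradient FS xS‖ ≤ ‖gradient FS xbarS‖ + ‖gradient FS xS - gradient FS xbarS‖ :=
        norm_le_insert' _ _
    _ ≤ ‖gradient ψ xbar - gradient ψ x + μb • (x - xbar)‖ + c₂ * ‖xS - xbarS‖ :=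
        add_le_add (EuclideanSpace.norm_subtype_le hgrad_xbar)
          (norm_gradient_sub_le_of_norm_fderiv_gradient_le hFS_C2 hHess)
    _ ≤ (Lhat * ‖x - xbar‖ + μb * ‖x - xbar‖) + c₂ * ‖x - xbar‖ := by
        gcongr
        · refine (norm_add_le _ _).trans (add_le_add ?_ ?_)
          · rwa [norm_sub_rev]
          · rw [norm_smul, Real.norm_of_nonneg hμb.le]
        · exact EuclideanSpace.norm_subtype_le fun i => by simp [hxS, hxbarS]
    _ = (Lhat + μb + c₂) * ‖x - xbar‖ := by ring

/-- bound on the smooth stationarity residual by the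
proximal-gradient residual: if `x̄` is the proximal-gradient point at `x` with
step `μ̄`, `sign(x) = sign(x̄)`, `S = supp(x)`, `∇ψ` satisfies
`‖∇ψ(x)−∇ψ(x̄)‖ ≤ L̂‖x−x̄‖` and the Hessian of `F_S` along the segment from
`x̄_S` to `x_S` is bounded by `ĉ₂`, then
`‖∇F_S(x_S)‖ ≤ (L̂ + μ̄ + ĉ₂)‖x − x̄‖`. -/
theorem stmt10 (m n : ℕ) (q lam μb Lhat c₂ : ℝ) (hq0 : 0 < q) (hq1 : q < 1)
    (hlam : 0 < lam) (hμb : 0 < μb) (hLhat : 0 < Lhat) (hc₂ : 0 < c₂)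
    (f : EuclideanSpace ℝ (Fin m) → ℝ) (hf : ContDiff ℝ 2 f)
    (A : Matrix (Fin m) (Fin n) ℝ)
    (ψ : EuclideanSpace ℝ (Fin n) → ℝ) (hψ : ∀ y, ψ y = f (WithLp.toLp 2 (A.mulVec y)))
    (x xbar : EuclideanSpace ℝ (Fin n)) (hx : x ≠ 0)
    (hmin : ∀ z : EuclideanSpace ℝ (Fin n),
      (inner ℝ (gradient ψ x) (xbar - x) : ℝ) + (μb / 2) * ‖xbar - x‖ ^ 2
          + lam * ∑ i, |xbar i| ^ q ≤
        (inner ℝ (gradient ψ x) (z - x) : ℝ) + (μb / 2) * ‖z - x‖ ^ 2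
          + lam * ∑ i, |z i| ^ q)
    (hsign : ∀ i, Real.sign (x i) = Real.sign (xbar i))
    (S : Finset (Fin n)) (hSdef : ∀ i, i ∈ S ↔ x i ≠ 0)
    (AS : Matrix (Fin m) {i // i ∈ S} ℝ) (hAS : ∀ j i, AS j i = A j i.1)
    (xS xbarS : EuclideanSpace ℝ {i // i ∈ S})
    (hxS : ∀ i, xS i = x i.1) (hxbarS : ∀ i, xbarS i = xbar i.1)
    (FS : EuclideanSpace ℝ {i // i ∈ S} → ℝ)
    (hFS : ∀ u, FS u = f (WithLp.toLp 2 (AS.mulVec u)) + lam * ∑ i, |u i| ^ q)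
    (hgradLip : ‖gradient ψ x - gradient ψ xbar‖ ≤ Lhat * ‖x - xbar‖)
    (hHess : ∀ τ ∈ Set.Icc (0:ℝ) 1,
      ‖fderiv ℝ (gradient FS) (xbarS + τ • (xS - xbarS))‖ ≤ c₂) :
    ‖gradient FS xS‖ ≤ (Lhat + μb + c₂) * ‖x - xbar‖ :=
  stmt10_general m n q lam μb Lhat c₂ hμb hc₂ f hf A ψ hψ x xbar hmin hsign S hSdef AS hAS xS xbarS
    hxS hxbarS FS hFS hgradLip hHess
end

section
/- Let {x^k}_{k∈ℕ} ⊂ ℝⁿ, let {F_k}_{k∈ℕ} ⊂ ℝ be strictly decreasing with F_k → F*, and set e_k := F_k − F* (so e_k > 0 for all k). Let η>0 and let φ:[0,η)→[0,∞) be continuous and concave with φ(0)=0, φ continuously differentiable on (0,η) and φ'(s)>0 for all s∈(0,η). Let a>0 and let {r_k} be nonnegative reals, and suppose there is k̂∈ℕ such that for all k ≥ k̂: e_k < η, F_k − F_{k+1} ≥ a·r_k·‖x^{k+1} − x^k‖, and φ'(e_k)·r_k ≥ 1. Then ∑_{k=k̂}^∞ ‖x^{k+1} − x^k‖ ≤ φ(e_{k̂})/a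 < ∞; in particular {x^k} has finite length and converges to some point x*∈ℝⁿ. -/
/-! Along the tail, concavity of `φ` gives `φ'(e_k)(e_k - e_{k+1}) ≤ φ(e_k) - φ(e_{k+1})`, and
multiplying the sufficient decrease by the KL inequality `φ'(e_k) r_k ≥ 1` turns this into
`a ‖x^{k+1} - x^k‖ ≤ φ(e_k) - φ(e_{k+1})`. The right-hand side telescopes and `φ ≥ 0`, so the
tail length is at most `φ(e_k̂)/a`; a sequence of finite length is Cauchy. -/

open Filter Topology

theorem StrictAnti.lt_of_tendsto {α β : Type*} [TopologicalSpace α] [Preorder α]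
    [OrderClosedTopology α] [PartialOrder β] [IsDirectedOrder β] [NoMaxOrder β] {f : β → α}
    {a : α} (hf : StrictAnti f) (ha : Tendsto f atTop (𝓝 a)) (b : β) : a < f b := by
  obtain ⟨c, hbc⟩ := exists_gt b
  exact (hf.antitone.le_of_tendsto ha c).trans_lt (hf hbc)

theorem ConcaveOn.mul_sub_le_sub_of_hasDerivAt {S : Set ℝ} {f : ℝ → ℝ} {x y f' : ℝ}
    (hfc : ConcaveOn ℝ S f) (hx : x ∈ S) (hy : y ∈ S) (hxy : x ≤ y) (hf' : HasDerivAt f f' y) :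
    f' * (y - x) ≤ f y - f x := by
  rcases hxy.lt_or_eq with hxy | rfl
  · have hslope := hfc.le_slope_of_hasDerivAt hx hy hxy hf'
    rwa [slope_def_field, le_div_iff₀ (sub_pos.2 hxy)] at hslope
  · simp

theorem ConcaveOn.mul_le_sub_of_kl {S : Set ℝ} {φ : ℝ → ℝ} {a r t δ e e' : ℝ}
    (hφ : ConcaveOn ℝ S φ) (he' : e' ∈ S) (he : e ∈ S) (hee' : e' ≤ e)
    (hderiv : HasDerivAt φ t e) (ht : 0 ≤ t) (haδ : 0 ≤ a * δ)
    (hdec : a * r * δ ≤ e - e') (hkl : 1 ≤ t * r) :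
    a * δ ≤ φ e - φ e' :=
  calc a * δ ≤ a * δ * (t * r) := le_mul_of_one_le_right haδ hkl
    _ = t * (a * r * δ) := by ring
    _ ≤ t * (e - e') := mul_le_mul_of_nonneg_left hdec ht
    _ ≤ φ e - φ e' := hφ.mul_sub_le_sub_of_hasDerivAt he' he hee' hderiv

theorem summable_and_tsum_le_of_mul_le_sub {d Φ : ℕ → ℝ} {a : ℝ} (ha : 0 < a)
    (hd : ∀ k, 0 ≤ d k) (hΦ : ∀ k, 0 ≤ Φ k) (hstep : ∀ k, a * d k ≤ Φ k - Φ (k + 1)) :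
    Summable d ∧ ∑' k, d k ≤ Φ 0 / a := by
  have hpartial : ∀ N, ∑ k ∈ Finset.range N, d k ≤ Φ 0 / a := by
    intro N
    rw [le_div_iff₀ ha, Finset.sum_mul]
    calc ∑ k ∈ Finset.range N, d k * a
        ≤ ∑ k ∈ Finset.range N, (Φ k - Φ (k + 1)) :=
          Finset.sum_le_sum fun k _ => (mul_comm (d k) a).trans_le (hstep k)
      _ = Φ 0 - Φ N := Finset.sum_range_sub' Φ N
      _ ≤ Φ 0 := sub_le_self _ (hΦ N)
  have hsum := summable_of_sum_range_le hd hpartial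
  exact ⟨hsum, hsum.tsum_le_of_sum_range_le hpartial⟩

theorem exists_tendsto_of_summable_norm_sub {E : Type*} [NormedAddCommGroup E] [CompleteSpace E]
    {x : ℕ → E} (hx : Summable fun k => ‖x (k + 1) - x k‖) : ∃ x₀, Tendsto x atTop (𝓝 x₀) := by
  refine cauchySeq_tendsto_of_complete (cauchySeq_of_summable_dist ?_)
  simpa only [dist_eq_norm, norm_sub_rev] using hx

theorem stmt12_general (n : ℕ) (x : ℕ → EuclideanSpace ℝ (Fin n))
    (F : ℕ → ℝ) (hFanti : StrictAnti F) (Fstar : ℝ)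
    (hFlim : Filter.Tendsto F Filter.atTop (nhds Fstar))
    (η a : ℝ) (ha : 0 < a)
    (φ φ' : ℝ → ℝ)
    (hφnonneg : ∀ s ∈ Set.Ico (0:ℝ) η, 0 ≤ φ s)
    (hφconc : ConcaveOn ℝ (Set.Ico 0 η) φ)
    (hφderiv : ∀ s ∈ Set.Ioo (0:ℝ) η, HasDerivAt φ (φ' s) s)
    (hφ'pos : ∀ s ∈ Set.Ioo (0:ℝ) η, 0 < φ' s)
    (r : ℕ → ℝ)
    (khat : ℕ)
    (hmain : ∀ k ≥ khat, F k - Fstar < η ∧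
      a * r k * ‖x (k + 1) - x k‖ ≤ F k - F (k + 1) ∧
      1 ≤ φ' (F k - Fstar) * r k) :
    Summable (fun k => ‖x (k + 1) - x k‖) ∧
    (∑' k : ℕ, ‖x (khat + k + 1) - x (khat + k)‖) ≤ φ (F khat - Fstar) / a ∧
    ∃ xstar : EuclideanSpace ℝ (Fin n),
      Filter.Tendsto x Filter.atTop (nhds xstar) := by
  have he_pos : ∀ k, 0 < F k - Fstar := fun k => sub_pos.2 (hFanti.lt_of_tendsto hFlim k)
  have he_mem : ∀ k ≥ khat, F k - Fstar ∈ Set.Ioo 0 η := fun k hk => ⟨he_pos k, (hmain k hk).1⟩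
  have hstep : ∀ i, a * ‖x (khat + i + 1) - x (khat + i)‖ ≤
      φ (F (khat + i) - Fstar) - φ (F (khat + i + 1) - Fstar) := by
    intro i
    have hk := Nat.le_add_right khat i
    obtain ⟨-, hdec, hkl⟩ := hmain _ hk
    have he'_lt : F (khat + i + 1) - Fstar < F (khat + i) - Fstar :=
      sub_lt_sub_right (hFanti (Nat.lt_succ_self _)) _
    refine hφconc.mul_le_sub_of_kl ⟨(he_pos _).le, he'_lt.trans (he_mem _ hk).2⟩
      (Set.Ioo_subset_Ico_self (he_mem _ hk)) he'_lt.le (hφderiv _ (he_mem _ hk))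
      (hφ'pos _ (he_mem _ hk)).le (by positivity) (hdec.trans_eq (by ring)) hkl
  obtain ⟨htail, hbound⟩ := summable_and_tsum_le_of_mul_le_sub
    (Φ := fun i => φ (F (khat + i) - Fstar)) ha (fun _ => norm_nonneg _)
    (fun i => hφnonneg _ (Set.Ioo_subset_Ico_self (he_mem _ (Nat.le_add_right khat i)))) hstep
  have hsum : Summable fun k => ‖x (k + 1) - x k‖ := by
    rw [← summable_nat_add_iff khat]
    simpa only [add_comm _ khat] using htail
  exact ⟨hsum, by simpa only [add_zero] using hbound, exists_tendsto_of_summable_norm_sub hsum⟩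

/-- abstract KL finite-length argument: if the strictly decreasing
values `F_k → F*` satisfy, for all `k ≥ k̂`, the sufficient decrease
`F_k − F_{k+1} ≥ a r_k ‖x^{k+1}−x^k‖` and the KL inequality `φ'(e_k) r_k ≥ 1`
with `e_k = F_k − F* < η`, where `φ` is a concave desingularizing function on
`[0,η)`, then the iterates have finite length, the tail sum is bounded by
`φ(e_k̂)/a`, and `x^k` converges. -/
theorem stmt12 (n : ℕ) (x : ℕ → EuclideanSpace ℝ (Fin n))
    (F : ℕ → ℝ) (hFanti : StrictAnti F) (Fstar : ℝ)
    (hFlim : Filter.Tendsto F Filter.atTop (nhds Fstar))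
    (η a : ℝ) (hη : 0 < η) (ha : 0 < a)
    (φ φ' : ℝ → ℝ) (hφ0 : φ 0 = 0)
    (hφnonneg : ∀ s ∈ Set.Ico (0:ℝ) η, 0 ≤ φ s)
    (hφcont : ContinuousOn φ (Set.Ico 0 η))
    (hφconc : ConcaveOn ℝ (Set.Ico 0 η) φ)
    (hφderiv : ∀ s ∈ Set.Ioo (0:ℝ) η, HasDerivAt φ (φ' s) s)
    (hφ'pos : ∀ s ∈ Set.Ioo (0:ℝ) η, 0 < φ' s)
    (r : ℕ → ℝ) (hr : ∀ k, 0 ≤ r k)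
    (khat : ℕ)
    (hmain : ∀ k ≥ khat, F k - Fstar < η ∧
      a * r k * ‖x (k + 1) - x k‖ ≤ F k - F (k + 1) ∧
      1 ≤ φ' (F k - Fstar) * r k) :
    Summable (fun k => ‖x (k + 1) - x k‖) ∧
    (∑' k : ℕ, ‖x (khat + k + 1) - x (khat + k)‖) ≤ φ (F khat - Fstar) / a ∧
    ∃ xstar : EuclideanSpace ℝ (Fin n),
      Filter.Tendsto x Filter.atTop (nhds xstar) :=
  stmt12_general n x F hFanti Fstar hFlim η a ha φ φ' hφnonneg hφconc hφderiv hφ'pos r khat hmain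
end

section
/- Let {Δ_k}_{k∈ℕ} ⊂ (0,∞), let {s_k} be nonnegative reals, and let c>0, γ̂>0, c̃₂>0 be constants such that for every k: c̃₂·s_k ≥ (2/c)·√(Δ_k) and Δ_k − Δ_{k+1} ≥ (γ̂/2)·s_k². Then 2γ̂ < c²c̃₂², and Δ_{k+1} ≤ ρ·Δ_k for all k with ρ := 1 − 2γ̂/(c²c̃₂²) ∈ (0,1); consequently Δ_k ≤ ρ^k·Δ_0 for all k, i.e. {Δ_k} converges Q-linearly to 0. -/
/-! Squaring the Łojasiewicz-type bound gives the error bound `4 Δ_k ≤ c² c̃₂² s_k²`; inserted into the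
sufficient decrease it yields `Δ_{k+1} ≤ ρ Δ_k`. Since `Δ_{k+1} > 0`, this forces `ρ > 0`, i.e.
`2γ̂ < c² c̃₂²`, and iterating the contraction gives `Δ_k ≤ ρ^k Δ_0`. -/

lemma sq_mul_le_sq_of_mul_sqrt_le {a x y : ℝ} (ha : 0 ≤ a) (h : a * √x ≤ y) : a ^ 2 * x ≤ y ^ 2 := by
  rw [← Real.sqrt_sq ha, ← Real.sqrt_mul (sq_nonneg a)] at h
  exact (Real.sqrt_le_iff.mp h).2

lemma four_mul_le_of_two_div_mul_sqrt_le {c x y : ℝ} (hc : 0 < c) (h : 2 / c * √x ≤ y) :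
    4 * x ≤ c ^ 2 * y ^ 2 :=
  calc 4 * x = c ^ 2 * ((2 / c) ^ 2 * x) := by field_simp; ring
    _ ≤ c ^ 2 * y ^ 2 := by gcongr; exact sq_mul_le_sq_of_mul_sqrt_le (by positivity) h

lemma le_one_sub_mul_of_sufficient_decrease {a b t γ A : ℝ} (hγ : 0 ≤ γ) (hA : 0 < A)
    (hbound : 4 * a ≤ A * t ^ 2) (hdec : γ / 2 * t ^ 2 ≤ a - b) :
    b ≤ (1 - 2 * γ / A) * a := by
  have : 2 * γ / A * a ≤ γ / 2 * t ^ 2 :=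
    calc 2 * γ / A * a = γ / (2 * A) * (4 * a) := by field_simp; ring
      _ ≤ γ / (2 * A) * (A * t ^ 2) := by gcongr
      _ = γ / 2 * t ^ 2 := by field_simp
  linarith

theorem stmt13_general (Δ : ℕ → ℝ) (hΔ : ∀ k, 0 < Δ k)
    (s : ℕ → ℝ)
    (c γhat c₂ : ℝ) (hc : 0 < c) (hγ : 0 < γhat) (hc₂ : 0 < c₂)
    (h1 : ∀ k, (2 / c) * Real.sqrt (Δ k) ≤ c₂ * s k)
    (h2 : ∀ k, (γhat / 2) * (s k) ^ 2 ≤ Δ k - Δ (k + 1)) :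
    2 * γhat < c ^ 2 * c₂ ^ 2 ∧
    (0 < 1 - 2 * γhat / (c ^ 2 * c₂ ^ 2) ∧ 1 - 2 * γhat / (c ^ 2 * c₂ ^ 2) < 1) ∧
    (∀ k, Δ (k + 1) ≤ (1 - 2 * γhat / (c ^ 2 * c₂ ^ 2)) * Δ k) ∧
    (∀ k, Δ k ≤ (1 - 2 * γhat / (c ^ 2 * c₂ ^ 2)) ^ k * Δ 0) := by
  have hA : 0 < c ^ 2 * c₂ ^ 2 := by positivity
  have contraction : ∀ k, Δ (k + 1) ≤ (1 - 2 * γhat / (c ^ 2 * c₂ ^ 2)) * Δ k := fun k =>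
    le_one_sub_mul_of_sufficient_decrease hγ.le hA
      ((four_mul_le_of_two_div_mul_sqrt_le hc (h1 k)).trans_eq (by ring)) (h2 k)
  have hρ_pos : 0 < 1 - 2 * γhat / (c ^ 2 * c₂ ^ 2) :=
    pos_of_mul_pos_left ((hΔ 1).trans_le (contraction 0)) (hΔ 0).le
  refine ⟨?_, ⟨hρ_pos, sub_lt_self _ (by positivity)⟩, contraction,
    fun k => le_geom hρ_pos.le k fun j _ => contraction j⟩
  rwa [sub_pos, div_lt_one hA] at hρ_pos

/-- abstract Q-linear convergence of the objective gap: if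
`c̃₂ s_k ≥ (2/c)√Δ_k` (KL of exponent 1/2 plus residual bound) and
`Δ_k − Δ_{k+1} ≥ (γ̂/2)s_k²` (sufficient decrease) with `Δ_k > 0`, then
`2γ̂ < c²c̃₂²` and `Δ_{k+1} ≤ ρΔ_k` with `ρ = 1 − 2γ̂/(c²c̃₂²) ∈ (0,1)`; hence
`Δ_k ≤ ρ^k Δ_0`. -/
theorem stmt13 (Δ : ℕ → ℝ) (hΔ : ∀ k, 0 < Δ k)
    (s : ℕ → ℝ) (hs : ∀ k, 0 ≤ s k)
    (c γhat c₂ : ℝ) (hc : 0 < c) (hγ : 0 < γhat) (hc₂ : 0 < c₂)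
    (h1 : ∀ k, (2 / c) * Real.sqrt (Δ k) ≤ c₂ * s k)
    (h2 : ∀ k, (γhat / 2) * (s k) ^ 2 ≤ Δ k - Δ (k + 1)) :
    2 * γhat < c ^ 2 * c₂ ^ 2 ∧
    (0 < 1 - 2 * γhat / (c ^ 2 * c₂ ^ 2) ∧ 1 - 2 * γhat / (c ^ 2 * c₂ ^ 2) < 1) ∧
    (∀ k, Δ (k + 1) ≤ (1 - 2 * γhat / (c ^ 2 * c₂ ^ 2)) * Δ k) ∧
    (∀ k, Δ k ≤ (1 - 2 * γhat / (c ^ 2 * c₂ ^ 2)) ^ k * Δ 0) :=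
  stmt13_general Δ hΔ s c γhat c₂ hc hγ hc₂ h1 h2
end

section
/- Let s≥1 and let {G_j}_{j∈ℕ} be a sequence of s×s real symmetric positive definite matrices converging (in any matrix norm) to a matrix G*, and let {r_j}_{j∈ℕ} ⊂ ℝ^s∖{0}. If there is a constant C>0 such that ‖G_j^{−1}r_j‖ ≤ C‖r_j‖ for all j, then liminf_{j→∞} ⟨r_j, G_j^{−1}r_j⟩ / ( ‖r_j‖·‖G_j^{−1}r_j‖ ) > 0, i.e. the angle between r_j and the direction d_j := −G_j^{−1}r_j stays bounded away from π/2. -/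
/-!
Write a positive semidefinite `A` as `S * S` with `S = √A` symmetric. Cauchy–Schwarz row by row
gives `‖A x‖² = ‖S (S x)‖² ≤ ‖S‖_F² ‖S x‖² = tr A · ⟨x, A x⟩`. With `A = G_j`, `x = d_j` and
`tr G_j` eventually bounded by some `M` (as `G_j → G*`), this yields
`‖r_j‖ ‖d_j‖ ≤ C ‖r_j‖² ≤ C M ⟨r_j, d_j⟩`, so the cosines are eventually at least `1 / (M C)`.
-/

open Filter Matrix Finset
open scoped InnerProductSpace

namespace Matrix

variable {m n : Type*} [Fintype m] [Fintype n]

theorem mulVec_dotProduct_self_le_trace_mul_transpose (M : Matrix m n ℝ) (y : n → ℝ) :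
    M *ᵥ y ⬝ᵥ M *ᵥ y ≤ (M * Mᵀ).trace * (y ⬝ᵥ y) := by
  calc M *ᵥ y ⬝ᵥ M *ᵥ y = ∑ i, (∑ k, M i k * y k) ^ 2 := by
        simp only [dotProduct, mulVec, sq]
    _ ≤ ∑ i, (∑ k, M i k ^ 2) * ∑ k, y k ^ 2 :=
        sum_le_sum fun i _ => sum_mul_sq_le_sq_mul_sq _ _ _
    _ = (M * Mᵀ).trace * (y ⬝ᵥ y) := by
        simp only [trace, diag, mul_apply, transpose_apply, dotProduct, sum_mul, sq]

open scoped MatrixOrder in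
theorem PosSemidef.mulVec_dotProduct_self_le_trace_mul {A : Matrix n n ℝ} (hA : A.PosSemidef)
    (x : n → ℝ) : A *ᵥ x ⬝ᵥ A *ᵥ x ≤ A.trace * (x ⬝ᵥ A *ᵥ x) := by
  classical
  set S := CFC.sqrt A
  have hS : Sᵀ = S := (isHermitian_iff_isSymm.1 (CFC.sqrt_nonneg A).posSemidef.1).eq
  have hSS : S * S = A := CFC.sqrt_mul_sqrt_self A hA.nonneg
  have hquad : x ⬝ᵥ A *ᵥ x = S *ᵥ x ⬝ᵥ S *ᵥ x := by
    rw [← hSS, ← mulVec_mulVec, dotProduct_mulVec, ← mulVec_transpose, hS]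
  simpa only [mulVec_mulVec, hSS, hS, hquad] using
    mulVec_dotProduct_self_le_trace_mul_transpose S (S *ᵥ x)

theorem PosSemidef.norm_sq_le_mul_inner {A : Matrix n n ℝ} (hA : A.PosSemidef)
    {r d : EuclideanSpace ℝ n} (hrd : r.ofLp = A *ᵥ d.ofLp) {M : ℝ} (hM : A.trace ≤ M) :
    ‖r‖ ^ 2 ≤ M * ⟪r, d⟫_ℝ := by
  have hinner : ⟪r, d⟫_ℝ = d.ofLp ⬝ᵥ A *ᵥ d.ofLp := by
    rw [EuclideanSpace.inner_eq_star_dotProduct, hrd, star_trivial, dotProduct_comm]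
  have hnorm : ‖r‖ ^ 2 = A *ᵥ d.ofLp ⬝ᵥ A *ᵥ d.ofLp := by
    rw [← real_inner_self_eq_norm_sq, EuclideanSpace.inner_eq_star_dotProduct, hrd, star_trivial]
  have hnonneg : 0 ≤ d.ofLp ⬝ᵥ A *ᵥ d.ofLp := by
    simpa only [star_trivial] using hA.dotProduct_mulVec_nonneg d.ofLp
  rw [hinner, hnorm]
  exact (hA.mulVec_dotProduct_self_le_trace_mul d.ofLp).trans
    (mul_le_mul_of_nonneg_right hM hnonneg)

end Matrix

theorem one_div_mul_le_real_inner_div_norm_mul_norm {E : Type*} [NormedAddCommGroup E]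
    [InnerProductSpace ℝ E] {r d : E} {M C : ℝ} (hr : r ≠ 0) (hM : 0 < M) (hC : 0 < C)
    (hrd : ‖r‖ ^ 2 ≤ M * ⟪r, d⟫_ℝ) (hd : ‖d‖ ≤ C * ‖r‖) :
    1 / (M * C) ≤ ⟪r, d⟫_ℝ / (‖r‖ * ‖d‖) := by
  have hinner : 0 < ⟪r, d⟫_ℝ :=
    pos_of_mul_pos_right ((pow_pos (norm_pos_iff.2 hr) 2).trans_le hrd) hM.le
  have hnorms : 0 < ‖r‖ * ‖d‖ := hinner.trans_le (real_inner_le_norm r d)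
  rw [div_le_div_iff₀ (mul_pos hM hC) hnorms]
  calc 1 * (‖r‖ * ‖d‖) ≤ C * ‖r‖ ^ 2 := by
        nlinarith [mul_le_mul_of_nonneg_left hd (norm_nonneg r)]
    _ ≤ C * (M * ⟪r, d⟫_ℝ) := by gcongr
    _ = ⟪r, d⟫_ℝ * (M * C) := by ring

theorem stmt15_general (s : ℕ) (C : ℝ) (hC : 0 < C)
    (G : ℕ → Matrix (Fin s) (Fin s) ℝ) (hGpd : ∀ j, (G j).PosDef)
    (Gstar : Matrix (Fin s) (Fin s) ℝ)
    (hGlim : ∀ a b, Filter.Tendsto (fun j => G j a b) Filter.atTop (nhds (Gstar a b)))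
    (r d : ℕ → EuclideanSpace ℝ (Fin s)) (hr : ∀ j, r j ≠ 0)
    (hd : ∀ j i, (G j).mulVec (d j) i = r j i)
    (hbound : ∀ j, ‖d j‖ ≤ C * ‖r j‖) :
    0 < Filter.liminf
      (fun j => (inner ℝ (r j) (d j) : ℝ) / (‖r j‖ * ‖d j‖)) Filter.atTop := by
  have htrace : Tendsto (fun j => (G j).trace) atTop (nhds Gstar.trace) :=
    tendsto_finsetSum _ fun i _ => hGlim i i
  set M := |Gstar.trace| + 1
  have htrace_le : ∀ᶠ j in atTop, (G j).trace ≤ M :=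
    htrace.eventually (eventually_le_nhds (by linarith [le_abs_self Gstar.trace]))
  have hM : 0 < M := by positivity
  have hcobdd : IsCoboundedUnder (· ≥ ·) atTop
      (fun j => ⟪r j, d j⟫_ℝ / (‖r j‖ * ‖d j‖)) :=
    isCoboundedUnder_ge_of_le atTop fun j =>
      (abs_le.1 (abs_real_inner_div_norm_mul_norm_le_one _ _)).2
  refine (one_div_pos.2 (mul_pos hM hC)).trans_le (le_liminf_of_le hcobdd ?_)
  filter_upwards [htrace_le] with j hj
  have hrd : (r j).ofLp = G j *ᵥ (d j).ofLp := funext fun i => (hd j i).symm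
  exact one_div_mul_le_real_inner_div_norm_mul_norm (hr j) hM hC
    ((hGpd j).posSemidef.norm_sq_le_mul_inner hrd hj) (hbound j)

/-- angle condition from the direction-residual bound: if the
symmetric positive definite matrices `G_j` converge (entrywise, equivalently in
any matrix norm) to `G*`, `r_j ≠ 0`, and the directions `d_j = G_j⁻¹ r_j`
(given by `G_j d_j = r_j`) satisfy `‖d_j‖ ≤ C‖r_j‖`, then
`liminf_j ⟨r_j, d_j⟩/(‖r_j‖‖d_j‖) > 0`. -/
theorem stmt15 (s : ℕ) (hs : 0 < s) (C : ℝ) (hC : 0 < C)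
    (G : ℕ → Matrix (Fin s) (Fin s) ℝ) (hGpd : ∀ j, (G j).PosDef)
    (Gstar : Matrix (Fin s) (Fin s) ℝ)
    (hGlim : ∀ a b, Filter.Tendsto (fun j => G j a b) Filter.atTop (nhds (Gstar a b)))
    (r d : ℕ → EuclideanSpace ℝ (Fin s)) (hr : ∀ j, r j ≠ 0)
    (hd : ∀ j i, (G j).mulVec (d j) i = r j i)
    (hbound : ∀ j, ‖d j‖ ≤ C * ‖r j‖) :
    0 < Filter.liminf
      (fun j => (inner ℝ (r j) (d j) : ℝ) / (‖r j‖ * ‖d j‖)) Filter.atTop :=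
  stmt15_general s C hC G hGpd Gstar hGlim r d hr hd hbound
end
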